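/- arXiv:2412.05648 — 9 statements merged into one kernel-verified Lean document; each statement's English description precedes it below -/
import Mathlib

section
/- Let k ≥ 2 and c₀, c₁, …, c_k ∈ ℝ. The k×k matrix C with entries C_{ij} = δ_{ij} c_i + c₀ (i,j ∈ {1,…,k}) is positive semidefinite if and only if either all c₀, c₁, …, c_k are nonnegative, or there exists an index i ∈ {0,…,k} such that c_i < 0, c_j > 0 for all j ≠ i, and 1/c₀ + 1/c₁ + ⋯ + 1/c_k ≤ 0. -/
/-!
Writing `y = (-∑ xᵢ, x₁, …, x_k)`, the quadratic form of the matrix becomes `∑ⱼ cⱼ yⱼ²` restricted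
to the hyperplane `∑ⱼ yⱼ = 0`, a condition symmetric in all `k + 1` indices. On that hyperplane,
the test vectors `eᵢ - eⱼ` give `cᵢ + cⱼ ≥ 0`, so at most one `cᵢ` is negative, and if `cᵢ < 0`
the test vector `c⁻¹ - T eᵢ`, with `T = ∑ⱼ cⱼ⁻¹`, gives the value `T (cᵢ T - 1) ≥ 0`, forcing
`T ≤ 0`. Conversely, if `cᵢ < 0` and `T ≤ 0`, Cauchy–Schwarz gives
`yᵢ² = (∑_{j ≠ i} yⱼ)² ≤ (∑_{j ≠ i} cⱼ⁻¹)(∑_{j ≠ i} cⱼ yⱼ²) ≤ -cᵢ⁻¹ ∑_{j ≠ i} cⱼ yⱼ²`.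
-/

open Finset Matrix

def WeightedSqNonnegOnSumZero {ι : Type*} [Fintype ι] (c : ι → ℝ) : Prop :=
  ∀ y : ι → ℝ, ∑ l, y l = 0 → 0 ≤ ∑ l, c l * y l ^ 2

namespace WeightedSqNonnegOnSumZero

variable {ι : Type*} [Fintype ι] {c : ι → ℝ}

lemma add_nonneg [DecidableEq ι] (h : WeightedSqNonnegOnSumZero c) {i j : ι} (hij : i ≠ j) :
    0 ≤ c i + c j := by
  have hy := h (Pi.single i 1 - Pi.single j 1) (by simp [sum_sub_distrib])
  rw [Fintype.sum_eq_add i j hij (fun l hl => by simp [hl.1, hl.2])] at hy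
  simpa [hij, hij.symm] using hy

lemma sum_inv_nonpos [DecidableEq ι] (h : WeightedSqNonnegOnSumZero c) {i : ι} (hi : c i < 0)
    (hc : ∀ j, j ≠ i → 0 < c j) : ∑ j, (c j)⁻¹ ≤ 0 := by
  set T := ∑ j, (c j)⁻¹
  have hc0 : ∀ j, c j ≠ 0 := fun j => by
    rcases eq_or_ne j i with rfl | hj
    exacts [hi.ne, (hc j hj).ne']
  have hy := h (fun j => (c j)⁻¹ - if j = i then T else 0) (by simp [sum_sub_distrib, T])
  have hterm : ∀ j, c j * ((c j)⁻¹ - if j = i then T else 0) ^ 2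
      = (c j)⁻¹ + if j = i then c i * T ^ 2 - 2 * T else 0 := fun j => by
    split_ifs with hj
    · subst hj; field_simp [hc0 j]; ring
    · rw [sub_zero, add_zero]; field_simp [hc0 j]
  simp only [hterm, sum_add_distrib, sum_ite_eq', mem_univ, if_true] at hy
  by_contra! hT
  nlinarith [mul_pos hT hT]

end WeightedSqNonnegOnSumZero

section

variable {ι : Type*} [Fintype ι] {c : ι → ℝ}

lemma weightedSqNonnegOnSumZero_of_sum_inv_nonpos [DecidableEq ι] {i : ι} (hi : c i < 0)
    (hc : ∀ j, j ≠ i → 0 < c j) (hsum : ∑ j, (c j)⁻¹ ≤ 0) : WeightedSqNonnegOnSumZero c := by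
  intro y hy
  set s := univ.erase i
  have hs : ∀ j ∈ s, 0 < c j := fun j hj => hc j (ne_of_mem_erase hj)
  set A := ∑ j ∈ s, c j * y j ^ 2
  set S := ∑ j ∈ s, (c j)⁻¹
  have hA : 0 ≤ A := sum_nonneg fun j hj => mul_nonneg (hs j hj).le (sq_nonneg _)
  have hyi : y i = -∑ j ∈ s, y j := by
    rw [← add_sum_erase _ _ (mem_univ i)] at hy; linarith
  have hS : S ≤ -(c i)⁻¹ := by
    rw [← add_sum_erase _ _ (mem_univ i)] at hsum; linarith
  have hCS : (∑ j ∈ s, y j) ^ 2 ≤ S * A :=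
    sum_sq_le_sum_mul_sum_of_sq_le_mul s (fun j hj => (inv_pos.2 (hs j hj)).le)
      (fun j hj => mul_nonneg (hs j hj).le (sq_nonneg _))
      (fun j hj => by rw [inv_mul_cancel_left₀ (hs j hj).ne'])
  have hyi_sq : -(c i * y i ^ 2) ≤ A := calc
    -(c i * y i ^ 2) = -c i * (∑ j ∈ s, y j) ^ 2 := by rw [hyi, neg_sq]; ring
    _ ≤ -c i * (S * A) := by gcongr; linarith
    _ ≤ -c i * (-(c i)⁻¹ * A) := by gcongr; linarith
    _ = A := by field_simp [hi.ne]
  rw [← add_sum_erase _ _ (mem_univ i)]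
  linarith

lemma weightedSqNonnegOnSumZero_of_nonneg (hc : ∀ i, 0 ≤ c i) : WeightedSqNonnegOnSumZero c :=
  fun _ _ => sum_nonneg fun j _ => mul_nonneg (hc j) (sq_nonneg _)

theorem weightedSqNonnegOnSumZero_iff [DecidableEq ι] :
    WeightedSqNonnegOnSumZero c ↔
      (∀ i, 0 ≤ c i) ∨ ∃ i, c i < 0 ∧ (∀ j, j ≠ i → 0 < c j) ∧ ∑ j, (c j)⁻¹ ≤ 0 := by
  constructor
  · intro h
    by_cases! hneg : ∀ i, 0 ≤ c i
    · exact .inl hneg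
    obtain ⟨i, hi⟩ := hneg
    have hc : ∀ j, j ≠ i → 0 < c j := fun j hj => by linarith [h.add_nonneg hj]
    exact .inr ⟨i, hi, hc, h.sum_inv_nonpos hi hc⟩
  · rintro (hc | ⟨i, hi, hc, hsum⟩)
    exacts [weightedSqNonnegOnSumZero_of_nonneg hc,
      weightedSqNonnegOnSumZero_of_sum_inv_nonpos hi hc hsum]

end

lemma forall_fin_quadratic_nonneg_iff {k : ℕ} (c : Fin (k + 1) → ℝ) :
    (∀ x : Fin k → ℝ, 0 ≤ c 0 * (∑ i, x i) ^ 2 + ∑ i, c i.succ * x i ^ 2) ↔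
      WeightedSqNonnegOnSumZero c := by
  constructor
  · intro h y hy
    rw [Fin.sum_univ_succ] at hy
    simpa [Fin.tail, Fin.sum_univ_succ, show y 0 = -∑ i : Fin k, y i.succ by linarith]
      using h (Fin.tail y)
  · intro h x
    simpa [Fin.sum_univ_succ] using h (Fin.cons (-∑ i, x i) x) (by simp [Fin.sum_univ_succ])

lemma posSemidef_diagonal_add_const_iff {n : Type*} [Fintype n] [DecidableEq n]
    (d : n → ℝ) (a : ℝ) :
    (diagonal d + of fun _ _ => a).PosSemidef ↔
      ∀ x : n → ℝ, 0 ≤ a * (∑ i, x i) ^ 2 + ∑ i, d i * x i ^ 2 := by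
  have hherm : (diagonal d + of fun _ _ => a).IsHermitian :=
    (isHermitian_diagonal d).add (by ext; simp)
  have hquad : ∀ x : n → ℝ, star x ⬝ᵥ ((diagonal d + of fun _ _ => a) *ᵥ x)
      = a * (∑ i, x i) ^ 2 + ∑ i, d i * x i ^ 2 := fun x => by
    have hmul : (diagonal d + of fun _ _ => a) *ᵥ x = fun i => d i * x i + a * ∑ j, x j := by
      ext i
      rw [add_mulVec, Pi.add_apply, mulVec_diagonal]
      simp [mulVec, dotProduct, mul_sum]
    rw [star_trivial, hmul, dotProduct]
    simp only [mul_add, sum_add_distrib]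
    rw [add_comm, ← sum_mul]
    congr 1
    · ring
    · exact sum_congr rfl fun i _ => by ring
  simp only [posSemidef_iff_dotProduct_mulVec, hquad, hherm, true_and]

theorem posSemidef_delta_plus_const_iff_general
    (k : ℕ) (c : Fin (k + 1) → ℝ) :
    (Matrix.of fun i j : Fin k =>
        (if i = j then c i.succ else 0) + c 0).PosSemidef ↔
      ((∀ i, 0 ≤ c i) ∨
        ∃ i, c i < 0 ∧ (∀ j, j ≠ i → 0 < c j) ∧ ∑ j, (c j)⁻¹ ≤ 0) := by
  have hmat : (Matrix.of fun i j : Fin k => (if i = j then c i.succ else 0) + c 0)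
      = diagonal (fun i => c i.succ) + of fun _ _ => c 0 := by
    ext i j; simp [diagonal_apply]
  rw [hmat, posSemidef_diagonal_add_const_iff, forall_fin_quadratic_nonneg_iff,
    weightedSqNonnegOnSumZero_iff]

/-- For `k ≥ 2` and `c₀, c₁, …, c_k ∈ ℝ`, the `k × k` matrix with entries
`C_{ij} = δ_{ij} c_i + c₀` is positive semidefinite iff either all `c₀, …, c_k` are
nonnegative, or some `c_i < 0`, all other `c_j > 0`, and `1/c₀ + ⋯ + 1/c_k ≤ 0`. -/
theorem posSemidef_delta_plus_const_iff
    (k : ℕ) (hk : 2 ≤ k) (c : Fin (k + 1) → ℝ) :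
    (Matrix.of fun i j : Fin k =>
        (if i = j then c i.succ else 0) + c 0).PosSemidef ↔
      ((∀ i, 0 ≤ c i) ∨
        ∃ i, c i < 0 ∧ (∀ j, j ≠ i → 0 < c j) ∧ ∑ j, (c j)⁻¹ ≤ 0) :=
  posSemidef_delta_plus_const_iff_general k c
end

section
/- Let k ≥ 2 and c₀, c₁, …, c_k ∈ ℝ. The k×k matrix C with entries C_{ij} = δ_{ij} c_i + c₀ is positive definite if and only if either all c₀, …, c_k are nonnegative with at most one of them equal to zero, or there exists i ∈ {0,…,k} such that c_i < 0, c_j > 0 for all j ≠ i, and 1/c₀ + 1/c₁ + ⋯ + 1/c_k < 0. -/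
/-!
Put `y = (-∑ᵢ xᵢ, x₁, …, x_k)`. Then `xᵀ C x = ∑ⱼ cⱼ yⱼ²`, and `x ↦ y` is a bijection onto the
hyperplane `∑ⱼ yⱼ = 0`, so `C` is positive definite iff the diagonal form `∑ⱼ cⱼ yⱼ²` is positive on
that hyperplane. Testing `eᵢ - eⱼ` gives `cᵢ + cⱼ > 0` for `i ≠ j`, so at most one `cᵢ` is `≤ 0`.
If `cᵢ ≤ 0` and the other `cⱼ` are positive, put `S = ∑_{j ≠ i} 1/cⱼ`; Cauchy–Schwarz gives
`yᵢ² = (∑_{j ≠ i} yⱼ)² ≤ S ∑_{j ≠ i} cⱼ yⱼ²`, so the form is positive as soon as `1 + cᵢ S > 0`,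
and its equality case `yⱼ = 1/cⱼ` shows that this is also necessary. For `cᵢ < 0` the condition
`1 + cᵢ S > 0` reads `∑ⱼ 1/cⱼ < 0`.
-/

open Finset Matrix

namespace Matrix

variable {n R : Type*} [DecidableEq n] [CommRing R]

theorem isHermitian_diagonal_add_const [StarRing R] [TrivialStar R] (d : n → R) (a : R) :
    (diagonal d + of fun _ _ => a).IsHermitian :=
  (isHermitian_diagonal d).add (by ext; simp)

theorem dotProduct_diagonal_add_const_mulVec [Fintype n] (d : n → R) (a : R) (x : n → R) :
    x ⬝ᵥ (diagonal d + of fun _ _ => a) *ᵥ x = ∑ i, d i * x i ^ 2 + a * (∑ i, x i) ^ 2 := by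
  have hconst : (of fun _ _ => a : Matrix n n R) *ᵥ x = fun _ => a * ∑ i, x i := by
    ext; simp [mulVec, dotProduct, mul_sum]
  rw [add_mulVec, dotProduct_add, hconst]
  simp only [dotProduct, mulVec_diagonal, ← sum_mul]
  congr 1
  · exact sum_congr rfl fun i _ => by ring
  · ring

end Matrix

theorem Fin.forall_sum_eq_zero_iff {R : Type*} [AddCommGroup R] {n : ℕ}
    {P : (Fin (n + 1) → R) → Prop} :
    (∀ y : Fin (n + 1) → R, ∑ j, y j = 0 → P y) ↔
      ∀ x : Fin n → R, P (Fin.cons (-∑ i, x i) x) := by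
  refine ⟨fun h x => h _ (by simp [Fin.sum_univ_succ]), fun h y hy => ?_⟩
  have hy0 : y 0 = -∑ i, Fin.tail y i := by
    rw [Fin.sum_univ_succ] at hy
    exact eq_neg_of_add_eq_zero_left hy
  simpa [← hy0, Fin.cons_self_tail] using h (Fin.tail y)

theorem Fintype.exists_ne_ne_zero_of_sum_eq_zero {ι M : Type*} [Fintype ι] [AddCommMonoid M]
    {y : ι → M} (hsum : ∑ j, y j = 0) (hy : y ≠ 0) (i : ι) : ∃ j ≠ i, y j ≠ 0 := by
  by_contra! h
  exact hy <| funext fun j => by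
    obtain rfl | hj := eq_or_ne j i
    · rwa [← Fintype.sum_eq_single j h]
    · exact h j hj

variable {ι 𝕜 : Type*} [Field 𝕜] [LinearOrder 𝕜] [IsStrictOrderedRing 𝕜]

theorem Finset.sq_sum_le_sum_inv_mul_sum_mul_sq (s : Finset ι) {c : ι → 𝕜}
    (hc : ∀ j ∈ s, 0 < c j) (y : ι → 𝕜) :
    (∑ j ∈ s, y j) ^ 2 ≤ (∑ j ∈ s, (c j)⁻¹) * ∑ j ∈ s, c j * y j ^ 2 :=
  sum_sq_le_sum_mul_sum_of_sq_le_mul s (fun j hj => (inv_pos.2 (hc j hj)).le)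
    (fun j hj => mul_nonneg (hc j hj).le (sq_nonneg _))
    (fun j hj => by rw [inv_mul_cancel_left₀ (hc j hj).ne'])

def PosDefOnSumZero {R : Type*} [Fintype ι] [CommRing R] [PartialOrder R] (c : ι → R) : Prop :=
  ∀ y : ι → R, ∑ j, y j = 0 → y ≠ 0 → 0 < ∑ j, c j * y j ^ 2

section PosDefOnSumZero

variable [Fintype ι] {c : ι → 𝕜}

theorem posDefOnSumZero_of_forall_pos (hc : ∀ j, 0 < c j) : PosDefOnSumZero c := by
  intro y _ hy
  obtain ⟨j, hj⟩ := Function.ne_iff.1 hy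
  exact sum_pos' (fun l _ => mul_nonneg (hc l).le (sq_nonneg _))
    ⟨j, mem_univ j, mul_pos (hc j) (pow_two_pos_of_ne_zero hj)⟩

variable [DecidableEq ι]

theorem PosDefOnSumZero.add_pos (h : PosDefOnSumZero c) {i j : ι} (hij : i ≠ j) :
    0 < c i + c j := by
  have hne : (Pi.single i 1 - Pi.single j 1 : ι → 𝕜) ≠ 0 :=
    sub_ne_zero.2 fun hs => by simpa [Pi.single_eq_of_ne hij] using congrFun hs i
  have hval : ∑ l, c l * (Pi.single i 1 - Pi.single j 1 : ι → 𝕜) l ^ 2 = c i + c j := by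
    rw [Fintype.sum_eq_add i j hij fun l hl => by simp [hl.1, hl.2]]
    simp [hij, hij.symm]
  exact hval ▸ h _ (by simp [sum_sub_distrib]) hne

theorem posDefOnSumZero_of_one_add_mul_sum_inv_pos {i : ι} (hi : c i ≤ 0)
    (hc : ∀ j ≠ i, 0 < c j) (h : 0 < 1 + c i * ∑ j ∈ univ.erase i, (c j)⁻¹) :
    PosDefOnSumZero c := by
  intro y hsum hy
  have hc' : ∀ j ∈ univ.erase i, 0 < c j := fun j hj => hc j (ne_of_mem_erase hj)
  set S := ∑ j ∈ univ.erase i, (c j)⁻¹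
  set Q := ∑ j ∈ univ.erase i, c j * y j ^ 2
  have hQ : 0 < Q := by
    obtain ⟨j, hji, hj⟩ := Fintype.exists_ne_ne_zero_of_sum_eq_zero hsum hy i
    exact sum_pos' (fun l hl => mul_nonneg (hc' l hl).le (sq_nonneg _))
      ⟨j, mem_erase.2 ⟨hji, mem_univ j⟩, mul_pos (hc j hji) (pow_two_pos_of_ne_zero hj)⟩
  have hyi : y i ^ 2 ≤ S * Q := by
    have hrest : ∑ j ∈ univ.erase i, y j = -y i := by
      rw [← add_sum_erase _ _ (mem_univ i)] at hsum
      linear_combination hsum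
    have := sq_sum_le_sum_inv_mul_sum_mul_sq _ hc' y
    rwa [hrest, neg_sq] at this
  calc 0 < (1 + c i * S) * Q := mul_pos h hQ
    _ ≤ c i * y i ^ 2 + Q := by nlinarith [mul_le_mul_of_nonpos_left hyi hi]
    _ = ∑ j, c j * y j ^ 2 := add_sum_erase _ (fun j => c j * y j ^ 2) (mem_univ i)

theorem PosDefOnSumZero.sum_inv_neg (h : PosDefOnSumZero c) {i : ι} (hi : c i < 0)
    (hc : ∀ j ≠ i, 0 < c j) : ∑ j, (c j)⁻¹ < 0 := by
  rw [← add_sum_erase _ _ (mem_univ i)]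
  set S := ∑ j ∈ univ.erase i, (c j)⁻¹
  have hS0 : 0 ≤ S := sum_nonneg fun j hj => (inv_pos.2 (hc j (ne_of_mem_erase hj))).le
  obtain hS | hS := hS0.eq_or_lt
  · rw [← hS, add_zero]
    exact inv_lt_zero.2 hi
  let y : ι → 𝕜 := fun j => if j = i then -S else (c j)⁻¹
  have hy : ∀ j ∈ univ.erase i, y j = (c j)⁻¹ := fun j hj => if_neg (ne_of_mem_erase hj)
  have hsum : ∑ j, y j = 0 := by
    rw [← add_sum_erase _ _ (mem_univ i), sum_congr rfl hy]
    simp [y, S]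
  have hval : ∑ j, c j * y j ^ 2 = S * (1 + c i * S) := by
    have hrest : ∑ j ∈ univ.erase i, c j * y j ^ 2 = S := sum_congr rfl fun j hj => by
      rw [hy j hj]
      field_simp [(hc j (ne_of_mem_erase hj)).ne']
    rw [← add_sum_erase _ _ (mem_univ i), hrest]
    simp only [y, if_pos, neg_sq]
    ring
  have hpos := hval ▸ h y hsum fun hy0 => hS.ne' (by simpa [y] using congrFun hy0 i)
  calc (c i)⁻¹ + S
      = (c i)⁻¹ * (1 + c i * S) := by rw [mul_add, mul_one, inv_mul_cancel_left₀ hi.ne]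
    _ < 0 := mul_neg_of_neg_of_pos (inv_lt_zero.2 hi) (pos_of_mul_pos_right hpos hS0)

theorem posDefOnSumZero_iff :
    PosDefOnSumZero c ↔
      ((∀ i, 0 ≤ c i) ∧ ∀ i j, c i = 0 → c j = 0 → i = j) ∨
        ∃ i, c i < 0 ∧ (∀ j, j ≠ i → 0 < c j) ∧ ∑ j, (c j)⁻¹ < 0 := by
  constructor
  · intro h
    by_cases hneg : ∃ i, c i < 0
    · obtain ⟨i, hi⟩ := hneg
      have hc : ∀ j ≠ i, 0 < c j := fun j hj => by linarith [h.add_pos hj]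
      exact Or.inr ⟨i, hi, hc, h.sum_inv_neg hi hc⟩
    · push Not at hneg
      refine Or.inl ⟨hneg, fun i j hi hj => by_contra fun hij => ?_⟩
      simpa [hi, hj] using h.add_pos hij
  · rintro (⟨hnonneg, hzero⟩ | ⟨i, hi, hc, hsum⟩)
    · by_cases hz : ∃ i, c i = 0
      · obtain ⟨i, hi⟩ := hz
        refine posDefOnSumZero_of_one_add_mul_sum_inv_pos hi.le (fun j hj => ?_) (by simp [hi])
        exact (hnonneg j).lt_of_ne' fun hj0 => hj (hzero j i hj0 hi)
      · push Not at hz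
        exact posDefOnSumZero_of_forall_pos fun j => (hnonneg j).lt_of_ne' (hz j)
    · refine posDefOnSumZero_of_one_add_mul_sum_inv_pos hi.le hc ?_
      rw [← add_sum_erase _ _ (mem_univ i)] at hsum
      rw [← mul_inv_cancel₀ hi.ne, ← mul_add]
      exact mul_pos_of_neg_of_neg hi hsum

end PosDefOnSumZero

theorem Matrix.posDef_diagonal_succ_add_const_iff {R : Type*} [CommRing R] [PartialOrder R]
    [StarRing R] [TrivialStar R] {k : ℕ} (c : Fin (k + 1) → R) :
    (diagonal (fun i : Fin k => c i.succ) + of fun _ _ => c 0).PosDef ↔ PosDefOnSumZero c := by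
  rw [posDef_iff_dotProduct_mulVec, PosDefOnSumZero, Fin.forall_sum_eq_zero_iff]
  refine (and_iff_right (isHermitian_diagonal_add_const _ _)).trans <| forall_congr' fun x => ?_
  have hne : (Fin.cons (-∑ i, x i) x : Fin (k + 1) → R) ≠ 0 ↔ x ≠ 0 := by
    refine ⟨fun h hx => h ?_, fun hx h => hx ((Fin.tail_cons _ _).symm.trans (congrArg Fin.tail h))⟩
    subst hx
    simp only [Pi.zero_apply, sum_const_zero, neg_zero]
    exact cons_zero_zero
  rw [hne, star_trivial, dotProduct_diagonal_add_const_mulVec, Fin.sum_univ_succ]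
  simp [add_comm]

theorem posDef_delta_plus_const_iff_general
    (k : ℕ) (c : Fin (k + 1) → ℝ) :
    (Matrix.of fun i j : Fin k =>
        (if i = j then c i.succ else 0) + c 0).PosDef ↔
      (((∀ i, 0 ≤ c i) ∧ ∀ i j, c i = 0 → c j = 0 → i = j) ∨
        ∃ i, c i < 0 ∧ (∀ j, j ≠ i → 0 < c j) ∧ ∑ j, (c j)⁻¹ < 0) :=
  (posDef_diagonal_succ_add_const_iff c).trans posDefOnSumZero_iff

/-- For `k ≥ 2` and `c₀, c₁, …, c_k ∈ ℝ`, the `k × k` matrix with entries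
`C_{ij} = δ_{ij} c_i + c₀` is positive definite iff either all `c₀, …, c_k` are nonnegative
with at most one of them zero, or some `c_i < 0`, all other `c_j > 0`, and
`1/c₀ + ⋯ + 1/c_k < 0`. -/
theorem posDef_delta_plus_const_iff
    (k : ℕ) (hk : 2 ≤ k) (c : Fin (k + 1) → ℝ) :
    (Matrix.of fun i j : Fin k =>
        (if i = j then c i.succ else 0) + c 0).PosDef ↔
      (((∀ i, 0 ≤ c i) ∧ ∀ i j, c i = 0 → c j = 0 → i = j) ∨
        ∃ i, c i < 0 ∧ (∀ j, j ≠ i → 0 < c j) ∧ ∑ j, (c j)⁻¹ < 0) :=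
  posDef_delta_plus_const_iff_general k c
end

section
/- Let k ≥ 2, let c₀, c₁, …, c_k ∈ ℝ with c_i < 0 for one fixed index i ∈ {0,…,k}, c_j > 0 for all j ≠ i, and c_i ≥ −(∑_{j≠i} 1/c_j)^{-1}. Then for every vector (x₀, x₁, …, x_k) ∈ ℝ^{k+1} with x₀ + x₁ + ⋯ + x_k = 0, one has ∑_{ℓ=0}^k c_ℓ x_ℓ² ≥ 0. -/
/-!
Writing `S = ∑_{j ≠ i} c_j⁻¹`, the hyperplane condition gives `x_i = -∑_{j ≠ i} x_j`, and
Cauchy–Schwarz for `(c_j^{-1/2})` and `(c_j^{1/2} x_j)` (in Sedrakyan's form) bounds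
`x_i² / S ≤ ∑_{j ≠ i} c_j x_j²`. The hypothesis `c_i ≥ -S⁻¹` absorbs the remaining term `c_i x_i²`.
-/

open Finset

theorem sq_sum_div_sum_inv_le_sum_mul_sq {ι R : Type*} [Semifield R] [LinearOrder R]
    [IsStrictOrderedRing R] [ExistsAddOfLE R] (s : Finset ι) (x : ι → R) {c : ι → R}
    (hc : ∀ j ∈ s, 0 < c j) :
    (∑ j ∈ s, x j) ^ 2 / ∑ j ∈ s, (c j)⁻¹ ≤ ∑ j ∈ s, c j * x j ^ 2 :=
  calc (∑ j ∈ s, x j) ^ 2 / ∑ j ∈ s, (c j)⁻¹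
      ≤ ∑ j ∈ s, x j ^ 2 / (c j)⁻¹ := sq_sum_div_le_sum_sq_div s x fun j hj => inv_pos.2 (hc j hj)
    _ = ∑ j ∈ s, c j * x j ^ 2 := by simp only [div_inv_eq_mul, mul_comm]

theorem sum_mul_sq_nonneg_of_sum_eq_zero {ι R : Type*} [Fintype ι] [DecidableEq ι] [Field R]
    [LinearOrder R] [IsStrictOrderedRing R] {c x : ι → R} {i : ι}
    (hc : ∀ j, j ≠ i → 0 < c j) (hci : -(∑ j ∈ univ.erase i, (c j)⁻¹)⁻¹ ≤ c i)
    (hx : ∑ ℓ, x ℓ = 0) :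
    0 ≤ ∑ ℓ, c ℓ * x ℓ ^ 2 := by
  have hxi : ∑ j ∈ univ.erase i, x j = -x i := by
    linarith [sum_erase_add univ x (mem_univ i)]
  have hcs := sq_sum_div_sum_inv_le_sum_mul_sq (univ.erase i) x
    fun j hj => hc j (ne_of_mem_erase hj)
  rw [hxi, neg_sq, div_eq_mul_inv] at hcs
  have hi := mul_le_mul_of_nonneg_right hci (sq_nonneg (x i))
  rw [← sum_erase_add univ _ (mem_univ i)]
  linarith

theorem sum_c_sq_nonneg_on_hyperplane_general
    (k : ℕ) (c : Fin (k + 1) → ℝ) (i : Fin (k + 1))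
    (hcj : ∀ j, j ≠ i → 0 < c j)
    (hineq : -(∑ j ∈ univ.erase i, (c j)⁻¹)⁻¹ ≤ c i) :
    ∀ x : Fin (k + 1) → ℝ, ∑ ℓ, x ℓ = 0 → 0 ≤ ∑ ℓ, c ℓ * x ℓ ^ 2 :=
  fun _ hx => sum_mul_sq_nonneg_of_sum_eq_zero hcj hineq hx

/-- If `c_i < 0` for one index, `c_j > 0` for all `j ≠ i` and
`c_i ≥ −(∑_{j≠i} 1/c_j)⁻¹`, then `∑ c_ℓ x_ℓ² ≥ 0` whenever `∑ x_ℓ = 0`. -/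
theorem sum_c_sq_nonneg_on_hyperplane
    (k : ℕ) (hk : 2 ≤ k) (c : Fin (k + 1) → ℝ) (i : Fin (k + 1))
    (hci : c i < 0) (hcj : ∀ j, j ≠ i → 0 < c j)
    (hineq : -(∑ j ∈ univ.erase i, (c j)⁻¹)⁻¹ ≤ c i) :
    ∀ x : Fin (k + 1) → ℝ, ∑ ℓ, x ℓ = 0 → 0 ≤ ∑ ℓ, c ℓ * x ℓ ^ 2 :=
  sum_c_sq_nonneg_on_hyperplane_general k c i hcj hineq
end

section
/- Let k ≥ 2 and c₀, …, c_k ∈ ℝ. Suppose the quadratic form Q(x₀,…,x_k) = ∑_{ℓ=0}^k c_ℓ x_ℓ² is nonnegative on the hyperplane {x₀ + ⋯ + x_k = 0}, and suppose min(c₀,…,c_k) < 0 is attained at index i. Then c_j > 0 for all j ≠ i, and 1 + c_i ∑_{j≠i} 1/c_j ≥ 0. -/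
open Finset

/-- If `∑ c_ℓ x_ℓ² ≥ 0` on the hyperplane `∑ x_ℓ = 0` and the minimum of
the `c_ℓ` is negative and attained at index `i`, then `c_j > 0` for all `j ≠ i` and
`1 + c_i ∑_{j≠i} 1/c_j ≥ 0`. -/
theorem necessity_from_constrained_nonnegativity
    (k : ℕ) (hk : 2 ≤ k) (c : Fin (k + 1) → ℝ)
    (hQ : ∀ x : Fin (k + 1) → ℝ, ∑ ℓ, x ℓ = 0 → 0 ≤ ∑ ℓ, c ℓ * x ℓ ^ 2)
    (i : Fin (k + 1)) (hmin : ∀ j, c i ≤ c j) (hneg : c i < 0) :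
    (∀ j, j ≠ i → 0 < c j) ∧
      0 ≤ 1 + c i * ∑ j ∈ univ.erase i, (c j)⁻¹ := by
  have hpos : ∀ j, j ≠ i → 0 < c j := by
    intro j hj
    have hsum : ∑ ℓ, ((if ℓ = i then (1:ℝ) else 0) - (if ℓ = j then 1 else 0)) = 0 := by
      rw [Finset.sum_sub_distrib]
      simp
    have h := hQ _ hsum
    have hQval : ∑ ℓ, c ℓ * ((if ℓ = i then (1:ℝ) else 0) - (if ℓ = j then 1 else 0)) ^ 2
        = c i + c j := by
      have : ∀ ℓ, c ℓ * ((if ℓ = i then (1:ℝ) else 0) - (if ℓ = j then 1 else 0)) ^ 2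
          = (if ℓ = i then c i else 0) + (if ℓ = j then c j else 0) := by
        intro ℓ
        by_cases h1 : ℓ = i <;> by_cases h2 : ℓ = j <;>
          simp_all [hj.symm] <;> ring
      rw [Finset.sum_congr rfl fun ℓ _ => this ℓ, Finset.sum_add_distrib]
      simp
    rw [hQval] at h
    nlinarith [hmin j]
  refine ⟨hpos, ?_⟩
  set S : ℝ := ∑ j ∈ univ.erase i, (c j)⁻¹ with hS
  have hSpos : 0 < S := by
    apply Finset.sum_pos
    · intro j hj
      exact inv_pos.mpr (hpos j (Finset.mem_erase.mp hj).1)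
    · refine ⟨(i + 1 : Fin (k+1)), ?_⟩
      simp only [Finset.mem_erase, Finset.mem_univ, and_true]
      intro h
      have h0 : (1 : Fin (k+1)) = 0 := by
        have h' : i + 1 = i + 0 := by simpa using h
        exact add_left_cancel h'
      rw [Fin.one_eq_zero_iff] at h0
      omega
  set x : Fin (k+1) → ℝ := fun ℓ => if ℓ = i then -S else (c ℓ)⁻¹ with hx
  have hsum : ∑ ℓ, x ℓ = 0 := by
    rw [← Finset.add_sum_erase _ x (Finset.mem_univ i)]
    have : ∑ ℓ ∈ univ.erase i, x ℓ = S := by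
      apply Finset.sum_congr rfl
      intro ℓ hℓ
      simp [hx, (Finset.mem_erase.mp hℓ).1]
    rw [this]
    simp [hx]
  have h := hQ x hsum
  have hQval : ∑ ℓ, c ℓ * x ℓ ^ 2 = c i * S ^ 2 + S := by
    rw [← Finset.add_sum_erase _ (fun ℓ => c ℓ * x ℓ ^ 2) (Finset.mem_univ i)]
    have h1 : ∑ ℓ ∈ univ.erase i, c ℓ * x ℓ ^ 2 = S := by
      rw [hS]
      apply Finset.sum_congr rfl
      intro ℓ hℓ
      have hℓi := (Finset.mem_erase.mp hℓ).1
      have hc := (hpos ℓ hℓi).ne'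
      simp only [hx, if_neg hℓi]
      field_simp
    rw [h1]
    simp [hx]
  rw [hQval] at h
  nlinarith
end

section
/- Let n ∈ ℕ, let I be a nonempty open interval, f : I → ℝ differentiable with nonvanishing derivative, and p = (p₁,…,pₙ) : I → ℝ₊ⁿ continuous, with p₀ := p₁+⋯+pₙ. Then for each ℓ ∈ {1,…,n} the partial derivative ∂_ℓ A_{f,p} exists at every diagonal point (t,…,t) ∈ Iⁿ and equals p_ℓ(t)/p₀(t). -/
open Finset
open Set Function Filter Topology

/-- The nonsymmetric generalized Bajraktarević mean
`A_{f,p}(x) = f⁻¹((∑ pᵢ(xᵢ)f(xᵢ))/(∑ pᵢ(xᵢ)))`, where the inverse of `f` is taken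
on the interval `I`. -/
noncomputable def bajMean {n : ℕ} (f : ℝ → ℝ) (I : Set ℝ) (p : Fin n → ℝ → ℝ)
    (x : Fin n → ℝ) : ℝ :=
  Function.invFunOn f I ((∑ i, p i (x i) * f (x i)) / ∑ i, p i (x i))

/-- helper: derivative of `invFunOn f I` at `f t` when `f` is strictly monotone near `t`. -/
lemma aux_invFunOn_hasDerivAt (f : ℝ → ℝ) (I : Set ℝ) (hinj : Set.InjOn f I)
    (a b t f' : ℝ) (hat : a < t) (htb : t < b) (hI : Set.Icc a b ⊆ I)
    (hmono : StrictMonoOn f (Set.Icc a b)) (hcont : ContinuousOn f (Set.Icc a b))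
    (hfd : HasDerivAt f f' t) (hf0 : f' ≠ 0) :
    HasDerivAt (Function.invFunOn f I) f'⁻¹ (f t) := by
  have htm : t ∈ Set.Icc a b := ⟨hat.le, htb.le⟩
  have ham : a ∈ Set.Icc a b := ⟨le_refl a, (hat.trans htb).le⟩
  have hbm : b ∈ Set.Icc a b := ⟨(hat.trans htb).le, le_refl b⟩
  -- key: for y between f a and f b, invFunOn hits it inside Icc a b
  have key : ∀ y ∈ Set.Ioo (f a) (f b),
      Function.invFunOn f I y ∈ Set.Icc a b ∧ f (Function.invFunOn f I y) = y := by
    intro y hy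
    obtain ⟨x, hx, hfx⟩ := intermediate_value_Icc (hat.trans htb).le hcont
      (Set.mem_Icc.2 ⟨hy.1.le, hy.2.le⟩)
    have hex : ∃ z ∈ I, f z = y := ⟨x, hI hx, hfx⟩
    have hfinv : f (Function.invFunOn f I y) = y := Function.invFunOn_eq hex
    have hmem : Function.invFunOn f I y ∈ I := Function.invFunOn_mem hex
    have : Function.invFunOn f I y = x := hinj hmem (hI hx) (hfinv.trans hfx.symm)
    exact ⟨this ▸ hx, hfinv⟩
  have hfab : f a < f t := hmono ham htm hat
  have hftb : f t < f b := hmono htm hbm htb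
  have hnhds : Set.Ioo (f a) (f b) ∈ 𝓝 (f t) := Ioo_mem_nhds hfab hftb
  have hfg : ∀ᶠ y in 𝓝 (f t), f (Function.invFunOn f I y) = y :=
    Filter.eventually_of_mem hnhds (fun y hy => (key y hy).2)
  have hinvt : Function.invFunOn f I (f t) = t := hinj.leftInvOn_invFunOn (hI htm)
  -- continuity of invFunOn at f t
  have hg : ContinuousAt (Function.invFunOn f I) (f t) := by
    rw [ContinuousAt, hinvt, tendsto_order]
    constructor
    · intro u hu
      set u' := max u a with hu'
      have hu't : u' < t := max_lt hu hat
      have hu'm : u' ∈ Set.Icc a b := ⟨le_max_right u a, hu't.le.trans htb.le⟩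
      have h1 : f u' < f t := hmono hu'm htm hu't
      have h2 : f a ≤ f u' := hmono.monotoneOn ham hu'm hu'm.1
      filter_upwards [Ioo_mem_nhds h1 hftb] with y hy
      have hy' : y ∈ Set.Ioo (f a) (f b) := ⟨lt_of_le_of_lt h2 hy.1, hy.2⟩
      obtain ⟨hmem, hfy⟩ := key y hy'
      by_contra hle
      push_neg at hle
      have : Function.invFunOn f I y ≤ u' := le_max_of_le_left hle
      have := hmono.monotoneOn hmem hu'm this
      rw [hfy] at this
      exact absurd hy.1 (not_lt.2 this)
    · intro v hv
      set v' := min v b with hv'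
      have htv' : t < v' := lt_min hv htb
      have hv'm : v' ∈ Set.Icc a b := ⟨hat.le.trans htv'.le, min_le_right v b⟩
      have h1 : f t < f v' := hmono htm hv'm htv'
      have h2 : f v' ≤ f b := hmono.monotoneOn hv'm hbm hv'm.2
      filter_upwards [Ioo_mem_nhds hfab h1] with y hy
      have hy' : y ∈ Set.Ioo (f a) (f b) := ⟨hy.1, lt_of_lt_of_le hy.2 h2⟩
      obtain ⟨hmem, hfy⟩ := key y hy'
      by_contra hle
      push_neg at hle
      have : v' ≤ Function.invFunOn f I y := (min_le_left v b).trans hle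
      have := hmono.monotoneOn hv'm hmem this
      rw [hfy] at this
      exact absurd hy.2 (not_lt.2 this)
  have hfd' : HasDerivAt f f' (Function.invFunOn f I (f t)) := by rw [hinvt]; exact hfd
  exact HasDerivAt.of_local_left_inverse hg hfd' hf0 hfg

theorem bajMean_partial_deriv_on_diagonal'
    (n : ℕ) (I : Set ℝ) (hIo : IsOpen I) (hIc : I.OrdConnected) (hIne : I.Nonempty)
    (f : ℝ → ℝ) (hfd : ∀ s ∈ I, DifferentiableAt ℝ f s) (hf' : ∀ s ∈ I, deriv f s ≠ 0)
    (p : Fin n → ℝ → ℝ) (hpc : ∀ i, ContinuousOn (p i) I)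
    (hpp : ∀ i, ∀ s ∈ I, 0 < p i s)
    (ℓ : Fin n) (t : ℝ) (ht : t ∈ I) :
    HasDerivAt (fun s => (fun x => Function.invFunOn f I
        ((∑ i, p i (x i) * f (x i)) / ∑ i, p i (x i))) (Function.update (fun _ => t) ℓ s))
      (p ℓ t / ∑ i, p i t) t := by
  classical
  set f' := deriv f t with hf'def
  have hfdt : HasDerivAt f f' t := (hfd t ht).hasDerivAt
  have hf0 : f' ≠ 0 := hf' t ht
  -- injectivity on I via Rolle
  have hinj : Set.InjOn f I := by
    have H : ∀ x ∈ I, ∀ y ∈ I, x < y → f x ≠ f y := by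
      intro x hx y hy hxy hfe
      have hsub : Set.Icc x y ⊆ I := hIc.out hx hy
      have hc : ContinuousOn f (Set.Icc x y) := fun s hs =>
        (hfd s (hsub hs)).continuousAt.continuousWithinAt
      obtain ⟨c, hc1, hc2⟩ := exists_deriv_eq_zero hxy hc hfe
      exact hf' c (hsub (Set.mem_Icc_of_Ioo hc1)) hc2
    intro x hx y hy hfe
    rcases lt_trichotomy x y with h | h | h
    · exact absurd hfe (H x hx y hy h)
    · exact h
    · exact absurd hfe.symm (H y hy x hx h)
  -- a compact interval around t inside I
  obtain ⟨ε, hε, hball⟩ := Metric.isOpen_iff.1 hIo t ht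
  set a := t - ε/2 with ha_def
  set b := t + ε/2 with hb_def
  have hat : a < t := by simp [ha_def]; linarith
  have htb : t < b := by simp [hb_def]; linarith
  have hIab : Set.Icc a b ⊆ I := by
    intro x hx
    apply hball
    have h1 : t - ε/2 ≤ x := hx.1
    have h2 : x ≤ t + ε/2 := hx.2
    rw [Metric.mem_ball, Real.dist_eq, abs_lt]
    constructor <;> linarith
  have hcont : ContinuousOn f (Set.Icc a b) := fun s hs =>
    (hfd s (hIab hs)).continuousAt.continuousWithinAt
  -- derivative of the inverse at f t
  have hφ : HasDerivAt (Function.invFunOn f I) f'⁻¹ (f t) := by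
    rcases ContinuousOn.strictMonoOn_of_injOn_Icc' (hat.trans htb).le hcont
        (hinj.mono hIab) with hm | hanti
    · exact aux_invFunOn_hasDerivAt f I hinj a b t f' hat htb hIab hm hcont hfdt hf0
    · set g : ℝ → ℝ := fun x => -f x with hg_def
      have hinjg : Set.InjOn g I := fun x hx y hy h => hinj hx hy (neg_injective h)
      have hmg : StrictMonoOn g (Set.Icc a b) := fun x hx y hy h => neg_lt_neg (hanti hx hy h)
      have hcg : ContinuousOn g (Set.Icc a b) := hcont.neg
      have hgd : HasDerivAt g (-f') t := hfdt.neg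
      have hψ : HasDerivAt (Function.invFunOn g I) (-f')⁻¹ (-(f t)) :=
        aux_invFunOn_hasDerivAt g I hinjg a b t (-f') hat htb hIab hmg hcg hgd
          (neg_ne_zero.2 hf0)
      have htm : t ∈ Set.Icc a b := ⟨hat.le, htb.le⟩
      have ham : a ∈ Set.Icc a b := ⟨le_refl a, (hat.trans htb).le⟩
      have hbm : b ∈ Set.Icc a b := ⟨(hat.trans htb).le, le_refl b⟩
      have hbt : f b < f t := hanti htm hbm htb
      have hta : f t < f a := hanti ham htm hat
      have hev : (Function.invFunOn f I) =ᶠ[𝓝 (f t)]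
          (fun y => Function.invFunOn g I (-y)) := by
        filter_upwards [Ioo_mem_nhds hbt hta] with y hy
        obtain ⟨x, hx, hfx⟩ := intermediate_value_Icc' (hat.trans htb).le hcont
          (Set.mem_Icc.2 ⟨hy.1.le, hy.2.le⟩)
        have hex1 : ∃ z ∈ I, f z = y := ⟨x, hIab hx, hfx⟩
        have hex2 : ∃ z ∈ I, g z = -y := ⟨x, hIab hx, by simp [hg_def, hfx]⟩
        refine hinj (Function.invFunOn_mem hex1) (Function.invFunOn_mem hex2) ?_
        have h1 : f (Function.invFunOn f I y) = y := Function.invFunOn_eq hex1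
        have h2 : g (Function.invFunOn g I (-y)) = -y := Function.invFunOn_eq hex2
        have h3 : f (Function.invFunOn g I (-y)) = y := by
          have := h2
          simp only [hg_def] at this
          linarith [this]
        rw [h1, h3]
      have hneg : HasDerivAt (fun y : ℝ => -y) (-1 : ℝ) (f t) := (hasDerivAt_id _).neg
      have hcomp : HasDerivAt (fun y => Function.invFunOn g I (-y)) ((-f')⁻¹ * (-1)) (f t) :=
        HasDerivAt.comp (f t) hψ hneg
      have hval : (-f')⁻¹ * (-1 : ℝ) = f'⁻¹ := by field_simp
      rw [hval] at hcomp
      exact hcomp.congr_of_eventuallyEq hev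
  -- the inner rational function q
  set D := ∑ i ∈ Finset.univ.erase ℓ, p i t with hD_def
  have hD0 : 0 ≤ D := Finset.sum_nonneg fun i _ => (hpp i t ht).le
  have hS : ∑ i, p i t = p ℓ t + D := (Finset.add_sum_erase _ _ (Finset.mem_univ ℓ)).symm
  set q : ℝ → ℝ := fun s =>
      (∑ i, p i (Function.update (fun _ => t) ℓ s i) * f (Function.update (fun _ => t) ℓ s i)) /
        ∑ i, p i (Function.update (fun _ => t) ℓ s i) with hq_def
  have hnum : ∀ s, (∑ i, p i (Function.update (fun _ => t) ℓ s i) *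
      f (Function.update (fun _ => t) ℓ s i)) = p ℓ s * f s + D * f t := by
    intro s
    rw [← Finset.add_sum_erase _ _ (Finset.mem_univ ℓ), Function.update_self, hD_def,
      Finset.sum_mul]
    congr 1
    exact Finset.sum_congr rfl fun i hi => by
      rw [Function.update_of_ne (Finset.ne_of_mem_erase hi)]
  have hden : ∀ s, (∑ i, p i (Function.update (fun _ => t) ℓ s i)) = p ℓ s + D := by
    intro s
    rw [← Finset.add_sum_erase _ _ (Finset.mem_univ ℓ), Function.update_self, hD_def]
    congr 1
    exact Finset.sum_congr rfl fun i hi => by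
      rw [Function.update_of_ne (Finset.ne_of_mem_erase hi)]
  have hqs : ∀ s, q s = (p ℓ s * f s + D * f t) / (p ℓ s + D) := fun s => by
    rw [hq_def]; dsimp only; rw [hnum s, hden s]
  have hdenpos : ∀ s ∈ I, 0 < p ℓ s + D := fun s hs => add_pos_of_pos_of_nonneg (hpp ℓ s hs) hD0
  have hqt : q t = f t := by
    rw [hqs t, div_eq_iff (hdenpos t ht).ne']
    ring
  -- derivative of q at t
  have hq : HasDerivAt q (p ℓ t / (p ℓ t + D) * f') t := by
    rw [hasDerivAt_iff_tendsto_slope]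
    have hIev : ∀ᶠ s in 𝓝[≠] t, s ∈ I :=
      mem_nhdsWithin_of_mem_nhds (hIo.mem_nhds ht)
    have hEq : ∀ᶠ s in 𝓝[≠] t,
        (fun s => p ℓ s / (p ℓ s + D) * slope f t s) s = slope q t s := by
      filter_upwards [hIev, self_mem_nhdsWithin] with s hsI hst
      have hst' : s ≠ t := hst
      have h1 : p ℓ s + D ≠ 0 := (hdenpos s hsI).ne'
      rw [slope_def_field, slope_def_field, hqs s, hqt]
      field_simp
      ring
    have hcontp : ContinuousAt (p ℓ) t := (hpc ℓ).continuousAt (hIo.mem_nhds ht)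
    have hlim1 : Tendsto (fun s => p ℓ s / (p ℓ s + D)) (𝓝 t) (𝓝 (p ℓ t / (p ℓ t + D))) :=
      hcontp.div (hcontp.add tendsto_const_nhds) (hdenpos t ht).ne'
    have hlim2 : Tendsto (slope f t) (𝓝[≠] t) (𝓝 f') :=
      hasDerivAt_iff_tendsto_slope.1 hfdt
    exact Tendsto.congr' hEq ((hlim1.mono_left nhdsWithin_le_nhds).mul hlim2)
  -- assemble
  have hφ' : HasDerivAt (Function.invFunOn f I) f'⁻¹ (q t) := by rw [hqt]; exact hφ
  have hmain := HasDerivAt.comp t hφ' hq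
  have hval : f'⁻¹ * (p ℓ t / (p ℓ t + D) * f') = p ℓ t / ∑ i, p i t := by
    rw [hS, mul_comm, mul_assoc, mul_inv_cancel₀ hf0, mul_one]
  rw [hval] at hmain
  exact hmain

/-- If `f` is differentiable on the open interval `I` with nonvanishing
derivative and the weight functions `pᵢ` are positive and continuous on `I`, then
`∂_ℓ A_{f,p}` exists at every diagonal point `(t,…,t)` and equals `p_ℓ(t)/p₀(t)`. -/
theorem bajMean_partial_deriv_on_diagonal
    (n : ℕ) (I : Set ℝ) (hIo : IsOpen I) (hIc : I.OrdConnected) (hIne : I.Nonempty)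
    (f : ℝ → ℝ) (hfd : ∀ s ∈ I, DifferentiableAt ℝ f s) (hf' : ∀ s ∈ I, deriv f s ≠ 0)
    (p : Fin n → ℝ → ℝ) (hpc : ∀ i, ContinuousOn (p i) I)
    (hpp : ∀ i, ∀ s ∈ I, 0 < p i s)
    (ℓ : Fin n) (t : ℝ) (ht : t ∈ I) :
    HasDerivAt (fun s => bajMean f I p (Function.update (fun _ => t) ℓ s))
      (p ℓ t / ∑ i, p i t) t :=
  bajMean_partial_deriv_on_diagonal' n I hIo hIc hIne f hfd hf' p hpc hpp ℓ t ht
end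

section
/- Let n ∈ ℕ, let I be a nonempty open interval, f : I → ℝ twice differentiable with nonvanishing first derivative, and p = (p₁,…,pₙ) : I → ℝ₊ⁿ continuously differentiable, p₀ := p₁+⋯+pₙ. Then for ℓ ≠ m in {1,…,n}, at every diagonal point (t,…,t): ∂_ℓ² A_{f,p}(t,…,t) = 2 p_ℓ'(t)(p₀(t)−p_ℓ(t))/p₀(t)² + (p_ℓ(t)(p₀(t)−p_ℓ(t))/p₀(t)²)·(f''(t)/f'(t)) and ∂_ℓ∂_m A_{f,p}(t,…,t) = −(p_ℓ p_m)'(t)/p₀(t)² − (p_ℓ(t)p_m(t)/p₀(t)²)·(f''(t)/f'(t)). -/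
/-!
Write `M(x)` for the weighted mean of the `f(xᵢ)` and `P(x) = ∑ pᵢ(xᵢ)`. By Darboux, `f'` has
constant sign, so `f` is injective on `I`; as `f'` is continuous, `f⁻¹` is differentiable on
`f(I)`, which contains `M(x)` for `x ∈ Iⁿ`. Differentiating `f(A(x)) = M(x)` gives, on `Iⁿ`,
`∂_j A(x) = (p_j'(x_j)(f(x_j) - M(x)) + p_j(x_j) f'(x_j)) / (P(x) f'(A(x)))`.
The second derivatives at `(t,…,t)` follow from the quotient rule applied to this formula along
`s ↦ (t,…,s,…,t)`, using `M = f(t)` and `A = t` on the diagonal. In `∂_ℓ²` the factor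
`f(x_ℓ) - M(x)` vanishes on the diagonal, so its coefficient `p_ℓ'(x_ℓ)` only has to be continuous.
-/

open Finset

/-- The partial derivative of a function of `n` real variables with respect
to the `m`-th variable. -/
noncomputable def pd {n : ℕ} (m : Fin n) (F : (Fin n → ℝ) → ℝ) (x : Fin n → ℝ) : ℝ :=
  deriv (fun s => F (Function.update x m s)) (x m)

open Filter Set Function
open scoped Topology

theorem HasDerivAt.continuousAt_mul_of_apply_eq_zero {𝕜 : Type*} [NontriviallyNormedField 𝕜]
    {a b : 𝕜 → 𝕜} {t b' : 𝕜}
    (hb : HasDerivAt b b' t) (ha : ContinuousAt a t) (hbt : b t = 0) :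
    HasDerivAt (fun s => a s * b s) (a t * b') t := by
  rw [hasDerivAt_iff_tendsto_slope] at hb ⊢
  have hslope : slope (fun s => a s * b s) t = fun s => a s * slope b t s := by
    ext s
    simp only [slope_def_field, hbt, mul_zero, sub_zero, mul_div_assoc]
  rw [hslope]
  exact (ha.mono_left nhdsWithin_le_nhds).mul hb

section InverseFunction

variable {I : Set ℝ} {f : ℝ → ℝ}

theorem injOn_of_deriv_ne_zero (hIc : I.OrdConnected) (hf' : ∀ s ∈ I, deriv f s ≠ 0) :
    InjOn f I := by
  have hfd : ∀ s ∈ I, DifferentiableAt ℝ f s := fun s hs =>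
    differentiableAt_of_deriv_ne_zero (hf' s hs)
  have hcont : ContinuousOn f I := fun s hs => (hfd s hs).continuousAt.continuousWithinAt
  rcases hasDerivWithinAt_forall_lt_or_forall_gt_of_forall_ne hIc.convex
    (fun s hs => (hfd s hs).hasDerivAt.hasDerivWithinAt) hf' with hneg | hpos
  · exact (strictAntiOn_of_deriv_neg hIc.convex hcont fun s hs =>
      hneg s (interior_subset hs)).injOn
  · exact (strictMonoOn_of_deriv_pos hIc.convex hcont fun s hs =>
      hpos s (interior_subset hs)).injOn

theorem hasStrictDerivAt_invFunOn (hIo : IsOpen I) (hIc : I.OrdConnected)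
    (hfd2 : ∀ s ∈ I, DifferentiableAt ℝ (deriv f) s) (hf' : ∀ s ∈ I, deriv f s ≠ 0)
    {w : ℝ} (hw : w ∈ I) : HasStrictDerivAt (invFunOn f I) (deriv f w)⁻¹ (f w) := by
  have hstrict : HasStrictDerivAt f (deriv f w) w := by
    refine hasStrictDerivAt_of_hasDerivAt_of_continuousAt ?_ (hfd2 w hw).continuousAt
    filter_upwards [hIo.mem_nhds hw] with s hs
    exact (differentiableAt_of_deriv_ne_zero (hf' s hs)).hasDerivAt
  refine hstrict.to_local_left_inverse (hf' w hw) ?_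
  filter_upwards [hIo.mem_nhds hw] with s hs
  exact (injOn_of_deriv_ne_zero hIc hf').leftInvOn_invFunOn hs

end InverseFunction

theorem hasDerivAt_sum_update {ι 𝕜 F : Type*} [Fintype ι] [DecidableEq ι]
    [NontriviallyNormedField 𝕜] [NormedAddCommGroup F] [NormedSpace 𝕜 F] (h : ι → 𝕜 → F)
    (x : ι → 𝕜) (j : ι) {s₀ : 𝕜} {d : F} (hj : HasDerivAt (h j) d s₀) :
    HasDerivAt (fun s => ∑ i, h i (update x j s i)) d s₀ := by
  have hsum : (fun s => ∑ i, h i (update x j s i)) =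
      fun s => h j s + ∑ i ∈ univ \ {j}, h i (x i) := by
    ext s
    simp only [apply_update (fun i => h i) x j s, sum_update_of_mem (mem_univ j)]
  rw [hsum]
  exact hj.add_const _

noncomputable def weightedFMean {n : ℕ} (f : ℝ → ℝ) (p : Fin n → ℝ → ℝ) (x : Fin n → ℝ) : ℝ :=
  (∑ i, p i (x i) * f (x i)) / ∑ i, p i (x i)

noncomputable def bajMeanPartial {n : ℕ} (f : ℝ → ℝ) (I : Set ℝ) (p : Fin n → ℝ → ℝ) (j : Fin n)
    (x : Fin n → ℝ) : ℝ :=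
  (deriv (p j) (x j) * (f (x j) - weightedFMean f p x) + p j (x j) * deriv f (x j)) /
    ((∑ i, p i (x i)) * deriv f (bajMean f I p x))

section Bajraktarevic

variable {n : ℕ} {I : Set ℝ} {f : ℝ → ℝ} {p : Fin n → ℝ → ℝ}

theorem bajMean_eq_invFunOn_weightedFMean (x : Fin n → ℝ) :
    bajMean f I p x = invFunOn f I (weightedFMean f p x) :=
  rfl

theorem weightedFMean_mem_image (hIc : I.OrdConnected) (hfc : ContinuousOn f I)
    {x : Fin n → ℝ} (hx : ∀ i, x i ∈ I) (hp : ∀ i, 0 ≤ p i (x i)) (hP : 0 < ∑ i, p i (x i)) :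
    weightedFMean f p x ∈ f '' I := by
  have hconv : Convex ℝ (f '' I) :=
    (hIc.isPreconnected.image f hfc).ordConnected.convex
  have h := hconv.centerMass_mem (fun i _ => hp i) hP fun i _ => mem_image_of_mem f (hx i)
  rwa [centerMass, smul_eq_mul, inv_mul_eq_div] at h

theorem hasDerivAt_weightedFMean_update {x : Fin n → ℝ} {j : Fin n}
    (hP : ∑ i, p i (x i) ≠ 0) (hpj : DifferentiableAt ℝ (p j) (x j))
    (hfj : DifferentiableAt ℝ f (x j)) :
    HasDerivAt (fun s => weightedFMean f p (update x j s))
      ((deriv (p j) (x j) * (f (x j) - weightedFMean f p x) + p j (x j) * deriv f (x j)) /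
        ∑ i, p i (x i)) (x j) := by
  have hnum := hasDerivAt_sum_update (fun i u => p i u * f u) x j
    (hpj.hasDerivAt.mul hfj.hasDerivAt)
  have hden := hasDerivAt_sum_update p x j hpj.hasDerivAt
  refine (hnum.div hden (by rwa [update_eq_self])).congr_deriv ?_
  simp only [update_eq_self, weightedFMean]
  field_simp
  ring

theorem hasDerivAt_bajMean_update (hIo : IsOpen I) (hIc : I.OrdConnected)
    (hfd2 : ∀ s ∈ I, DifferentiableAt ℝ (deriv f) s) (hf' : ∀ s ∈ I, deriv f s ≠ 0)
    {x : Fin n → ℝ} (hx : ∀ i, x i ∈ I) (hp : ∀ i, 0 < p i (x i)) {j : Fin n}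
    (hpj : DifferentiableAt ℝ (p j) (x j)) :
    HasDerivAt (fun s => bajMean f I p (update x j s)) (bajMeanPartial f I p j x) (x j) := by
  have hP : 0 < ∑ i, p i (x i) := sum_pos (fun i _ => hp i) ⟨j, mem_univ j⟩
  have hfc : ContinuousOn f I := fun s hs =>
    (differentiableAt_of_deriv_ne_zero (hf' s hs)).continuousAt.continuousWithinAt
  have hM := weightedFMean_mem_image hIc hfc hx (fun i => (hp i).le) hP
  have hA : bajMean f I p x ∈ I := invFunOn_mem hM
  have hinv := (hasStrictDerivAt_invFunOn hIo hIc hfd2 hf' hA).hasDerivAt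
  rw [bajMean_eq_invFunOn_weightedFMean, invFunOn_eq hM] at hinv
  have hmean := hasDerivAt_weightedFMean_update hP.ne' hpj
    (differentiableAt_of_deriv_ne_zero (hf' _ (hx j)))
  refine (hinv.comp_of_eq (x j) hmean (by rw [update_eq_self])).congr_deriv ?_
  rw [bajMeanPartial, bajMean_eq_invFunOn_weightedFMean]
  ring

theorem pd_bajMean (hIo : IsOpen I) (hIc : I.OrdConnected)
    (hfd2 : ∀ s ∈ I, DifferentiableAt ℝ (deriv f) s) (hf' : ∀ s ∈ I, deriv f s ≠ 0)
    {x : Fin n → ℝ} (hx : ∀ i, x i ∈ I) (hp : ∀ i, 0 < p i (x i)) {j : Fin n}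
    (hpj : DifferentiableAt ℝ (p j) (x j)) :
    pd j (bajMean f I p) x = bajMeanPartial f I p j x :=
  (hasDerivAt_bajMean_update hIo hIc hfd2 hf' hx hp hpj).deriv

theorem weightedFMean_const {t : ℝ} (hP : ∑ i, p i t ≠ 0) :
    weightedFMean f p (fun _ => t) = f t := by
  rw [weightedFMean, ← sum_mul, mul_div_cancel_left₀ _ hP]

theorem bajMean_const (hIc : I.OrdConnected) (hf' : ∀ s ∈ I, deriv f s ≠ 0) {t : ℝ} (ht : t ∈ I)
    (hP : ∑ i, p i t ≠ 0) : bajMean f I p (fun _ => t) = t := by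
  rw [bajMean_eq_invFunOn_weightedFMean, weightedFMean_const hP]
  exact (injOn_of_deriv_ne_zero hIc hf').leftInvOn_invFunOn ht

theorem bajMeanPartial_const (hIc : I.OrdConnected) (hf' : ∀ s ∈ I, deriv f s ≠ 0) {t : ℝ}
    (ht : t ∈ I) (hP : ∑ i, p i t ≠ 0) (j : Fin n) :
    bajMeanPartial f I p j (fun _ => t) = p j t / ∑ i, p i t := by
  rw [bajMeanPartial, weightedFMean_const hP, bajMean_const hIc hf' ht hP, sub_self, mul_zero,
    zero_add, mul_div_mul_right _ _ (hf' t ht)]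

end Bajraktarevic

section Diagonal

variable {n : ℕ} {I : Set ℝ} {f : ℝ → ℝ} {p : Fin n → ℝ → ℝ} {t : ℝ} {ℓ : Fin n}

theorem hasDerivAt_weightedFMean_update_const (hP : ∑ i, p i t ≠ 0)
    (hpℓ : DifferentiableAt ℝ (p ℓ) t) (hft : DifferentiableAt ℝ f t) :
    HasDerivAt (fun s => weightedFMean f p (update (fun _ => t) ℓ s))
      (p ℓ t * deriv f t / ∑ i, p i t) t := by
  refine (hasDerivAt_weightedFMean_update (x := fun _ => t) hP hpℓ hft).congr_deriv ?_
  rw [weightedFMean_const hP, sub_self, mul_zero, zero_add]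

theorem hasDerivAt_bajMean_update_const (hIo : IsOpen I) (hIc : I.OrdConnected)
    (hfd2 : ∀ s ∈ I, DifferentiableAt ℝ (deriv f) s) (hf' : ∀ s ∈ I, deriv f s ≠ 0)
    (ht : t ∈ I) (hp : ∀ i, 0 < p i t) (hpℓ : DifferentiableAt ℝ (p ℓ) t) :
    HasDerivAt (fun s => bajMean f I p (update (fun _ => t) ℓ s)) (p ℓ t / ∑ i, p i t) t := by
  have hP : ∑ i, p i t ≠ 0 := (sum_pos (fun i _ => hp i) ⟨ℓ, mem_univ ℓ⟩).ne'
  rw [← bajMeanPartial_const hIc hf' ht hP]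
  exact hasDerivAt_bajMean_update (x := fun _ => t) hIo hIc hfd2 hf' (fun _ => ht) hp hpℓ

theorem hasDerivAt_sum_mul_deriv_bajMean_update_const (hIo : IsOpen I) (hIc : I.OrdConnected)
    (hfd2 : ∀ s ∈ I, DifferentiableAt ℝ (deriv f) s) (hf' : ∀ s ∈ I, deriv f s ≠ 0)
    (ht : t ∈ I) (hp : ∀ i, 0 < p i t) (hpℓ : DifferentiableAt ℝ (p ℓ) t) :
    HasDerivAt (fun s => (∑ i, p i (update (fun _ => t) ℓ s i)) *
        deriv f (bajMean f I p (update (fun _ => t) ℓ s)))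
      (deriv (p ℓ) t * deriv f t + p ℓ t * deriv (deriv f) t) t := by
  have hP : ∑ i, p i t ≠ 0 := (sum_pos (fun i _ => hp i) ⟨ℓ, mem_univ ℓ⟩).ne'
  have hA := hasDerivAt_bajMean_update_const hIo hIc hfd2 hf' ht hp hpℓ
  have hf'' : HasDerivAt (deriv f) (deriv (deriv f) t)
      (bajMean f I p (update (fun _ => t) ℓ t)) := by
    rw [update_eq_self, bajMean_const hIc hf' ht hP]
    exact (hfd2 t ht).hasDerivAt
  refine ((hasDerivAt_sum_update p _ ℓ hpℓ.hasDerivAt).mul (hf''.comp t hA)).congr_deriv ?_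
  rw [comp_apply, update_eq_self, bajMean_const hIc hf' ht hP]
  field_simp

theorem hasDerivAt_bajMeanPartial_self_update_const (hIo : IsOpen I) (hIc : I.OrdConnected)
    (hfd2 : ∀ s ∈ I, DifferentiableAt ℝ (deriv f) s) (hf' : ∀ s ∈ I, deriv f s ≠ 0)
    (ht : t ∈ I) (hp : ∀ i, 0 < p i t) (hpℓ : DifferentiableAt ℝ (p ℓ) t)
    (hpℓ' : ContinuousAt (deriv (p ℓ)) t) :
    HasDerivAt (fun s => bajMeanPartial f I p ℓ (update (fun _ => t) ℓ s))
      (2 * deriv (p ℓ) t * ((∑ i, p i t) - p ℓ t) / (∑ i, p i t) ^ 2 +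
        p ℓ t * ((∑ i, p i t) - p ℓ t) / (∑ i, p i t) ^ 2 *
          (deriv (deriv f) t / deriv f t)) t := by
  have hP : ∑ i, p i t ≠ 0 := (sum_pos (fun i _ => hp i) ⟨ℓ, mem_univ ℓ⟩).ne'
  have hf't : deriv f t ≠ 0 := hf' t ht
  have hft := differentiableAt_of_deriv_ne_zero hf't
  have hgap := hft.hasDerivAt.sub (hasDerivAt_weightedFMean_update_const hP hpℓ hft)
  have hnum := (hgap.continuousAt_mul_of_apply_eq_zero hpℓ'
    (by rw [Pi.sub_apply, update_eq_self, weightedFMean_const hP, sub_self])).add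
    (hpℓ.hasDerivAt.mul (hfd2 t ht).hasDerivAt)
  have hden := hasDerivAt_sum_mul_deriv_bajMean_update_const hIo hIc hfd2 hf' ht hp hpℓ
  simp only [bajMeanPartial, update_self]
  refine (hnum.div hden ?_).congr_deriv ?_
  · rw [update_eq_self, bajMean_const hIc hf' ht hP]
    exact mul_ne_zero hP hf't
  · simp only [Pi.add_apply, Pi.sub_apply, Pi.mul_apply, update_eq_self,
      weightedFMean_const hP, bajMean_const hIc hf' ht hP]
    field_simp
    ring

theorem hasDerivAt_bajMeanPartial_update_const_of_ne (hIo : IsOpen I) (hIc : I.OrdConnected)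
    (hfd2 : ∀ s ∈ I, DifferentiableAt ℝ (deriv f) s) (hf' : ∀ s ∈ I, deriv f s ≠ 0)
    (ht : t ∈ I) (hp : ∀ i, 0 < p i t) {m : Fin n} (hmℓ : m ≠ ℓ)
    (hpℓ : DifferentiableAt ℝ (p ℓ) t) (hpm : DifferentiableAt ℝ (p m) t) :
    HasDerivAt (fun s => bajMeanPartial f I p m (update (fun _ => t) ℓ s))
      (-(deriv (fun u => p ℓ u * p m u) t) / (∑ i, p i t) ^ 2 -
        p ℓ t * p m t / (∑ i, p i t) ^ 2 * (deriv (deriv f) t / deriv f t)) t := by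
  have hP : ∑ i, p i t ≠ 0 := (sum_pos (fun i _ => hp i) ⟨ℓ, mem_univ ℓ⟩).ne'
  have hf't : deriv f t ≠ 0 := hf' t ht
  have hft := differentiableAt_of_deriv_ne_zero hf't
  have hnum := (((hasDerivAt_const t (f t)).sub (hasDerivAt_weightedFMean_update_const hP hpℓ
    hft)).const_mul (deriv (p m) t)).add_const (p m t * deriv f t)
  have hden := hasDerivAt_sum_mul_deriv_bajMean_update_const hIo hIc hfd2 hf' ht hp hpℓ
  simp only [bajMeanPartial, update_of_ne hmℓ]
  refine (hnum.div hden ?_).congr_deriv ?_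
  · rw [update_eq_self, bajMean_const hIc hf' ht hP]
    exact mul_ne_zero hP hf't
  · simp only [Pi.sub_apply, update_eq_self, weightedFMean_const hP,
      bajMean_const hIc hf' ht hP]
    rw [deriv_fun_mul hpℓ hpm]
    field_simp
    ring

end Diagonal

theorem bajMean_second_partial_derivs_on_diagonal_general
    (n : ℕ) (I : Set ℝ) (hIo : IsOpen I) (hIc : I.OrdConnected)
    (f : ℝ → ℝ)
    (hfd2 : ∀ s ∈ I, DifferentiableAt ℝ (deriv f) s)
    (hf' : ∀ s ∈ I, deriv f s ≠ 0)
    (p : Fin n → ℝ → ℝ)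
    (hpd : ∀ i, ∀ s ∈ I, DifferentiableAt ℝ (p i) s)
    (hpd' : ∀ i, ContinuousOn (deriv (p i)) I)
    (hpp : ∀ i, ∀ s ∈ I, 0 < p i s)
    (ℓ m : Fin n) (hℓm : ℓ ≠ m) (t : ℝ) (ht : t ∈ I) :
    HasDerivAt (fun s => pd ℓ (bajMean f I p) (Function.update (fun _ => t) ℓ s))
      (2 * deriv (p ℓ) t * ((∑ i, p i t) - p ℓ t) / (∑ i, p i t) ^ 2 +
        p ℓ t * ((∑ i, p i t) - p ℓ t) / (∑ i, p i t) ^ 2 *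
          (deriv (deriv f) t / deriv f t)) t ∧
    HasDerivAt (fun s => pd m (bajMean f I p) (Function.update (fun _ => t) ℓ s))
      (-(deriv (fun u => p ℓ u * p m u) t) / (∑ i, p i t) ^ 2 -
        p ℓ t * p m t / (∑ i, p i t) ^ 2 * (deriv (deriv f) t / deriv f t)) t := by
  have hpt : ∀ i, 0 < p i t := fun i => hpp i t ht
  have hpd_eq : ∀ j, (fun s => pd j (bajMean f I p) (update (fun _ => t) ℓ s)) =ᶠ[𝓝 t]
      fun s => bajMeanPartial f I p j (update (fun _ => t) ℓ s) := fun j => by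
    filter_upwards [hIo.mem_nhds ht] with s hs
    have hy : ∀ i, update (fun _ => t) ℓ s i ∈ I :=
      (forall_update_iff _ (p := fun _ u => u ∈ I)).2 ⟨hs, fun _ _ => ht⟩
    exact pd_bajMean hIo hIc hfd2 hf' hy (fun i => hpp i _ (hy i)) (hpd j _ (hy j))
  constructor
  · refine (hasDerivAt_bajMeanPartial_self_update_const hIo hIc hfd2 hf' ht hpt (hpd ℓ t ht)
      ((hpd' ℓ).continuousAt (hIo.mem_nhds ht))).congr_of_eventuallyEq (hpd_eq ℓ)
  · refine (hasDerivAt_bajMeanPartial_update_const_of_ne hIo hIc hfd2 hf' ht hpt hℓm.symm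
      (hpd ℓ t ht) (hpd m t ht)).congr_of_eventuallyEq (hpd_eq m)

/-- Second-order partial derivatives of the Bajraktarević mean at
diagonal points: for `ℓ ≠ m`,
`∂_ℓ² A_{f,p}(t,…,t) = 2p_ℓ'(p₀−p_ℓ)/p₀² + (p_ℓ(p₀−p_ℓ)/p₀²)·f''/f'` and
`∂_ℓ∂_m A_{f,p}(t,…,t) = −(p_ℓ p_m)'/p₀² − (p_ℓ p_m/p₀²)·f''/f'`. -/
theorem bajMean_second_partial_derivs_on_diagonal
    (n : ℕ) (I : Set ℝ) (hIo : IsOpen I) (hIc : I.OrdConnected) (hIne : I.Nonempty)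
    (f : ℝ → ℝ) (hfd : ∀ s ∈ I, DifferentiableAt ℝ f s)
    (hfd2 : ∀ s ∈ I, DifferentiableAt ℝ (deriv f) s)
    (hf' : ∀ s ∈ I, deriv f s ≠ 0)
    (p : Fin n → ℝ → ℝ)
    (hpd : ∀ i, ∀ s ∈ I, DifferentiableAt ℝ (p i) s)
    (hpd' : ∀ i, ContinuousOn (deriv (p i)) I)
    (hpp : ∀ i, ∀ s ∈ I, 0 < p i s)
    (ℓ m : Fin n) (hℓm : ℓ ≠ m) (t : ℝ) (ht : t ∈ I) :
    HasDerivAt (fun s => pd ℓ (bajMean f I p) (Function.update (fun _ => t) ℓ s))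
      (2 * deriv (p ℓ) t * ((∑ i, p i t) - p ℓ t) / (∑ i, p i t) ^ 2 +
        p ℓ t * ((∑ i, p i t) - p ℓ t) / (∑ i, p i t) ^ 2 *
          (deriv (deriv f) t / deriv f t)) t ∧
    HasDerivAt (fun s => pd m (bajMean f I p) (Function.update (fun _ => t) ℓ s))
      (-(deriv (fun u => p ℓ u * p m u) t) / (∑ i, p i t) ^ 2 -
        p ℓ t * p m t / (∑ i, p i t) ^ 2 * (deriv (deriv f) t / deriv f t)) t :=
  bajMean_second_partial_derivs_on_diagonal_general n I hIo hIc f hfd2 hf' p hpd hpd' hpp ℓ m hℓm t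
    ht
end

section
/- Let k ≥ 2 and let (r₀,s₀),…,(r_k,s_k) ∈ ℝ². Define χ_{r,s}(t) := (t^r − t^s)/(r−s) if r ≠ s and χ_{r,s}(t) := t^r ln t if r = s, for t > 0. Assume that for all z ∈ ℝ₊^k and all t₁,…,t_k ∈ [0,1] with t₁+⋯+t_k = 1: χ_{r₀,s₀}(t₁z₁+⋯+t_k z_k) ≤ ∑_{j=1}^k t_j χ_{r_j,s_j}(z_j). Then for all n ∈ ℕ, all λ ∈ ℝ₊ⁿ with ∑λᵢ = 1, and all x ∈ ℝ₊^{n×k}: G_{r₀,s₀;λ}(x₁¹+⋯+x₁^k, …, xₙ¹+⋯+xₙ^k) ≤ G_{r₁,s₁;λ}(x¹) + ⋯ + G_{r_k,s_k;λ}(x^k), where x^j is the j-th column and xᵢ the i-th row of x. -/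
/-!
For `y ∈ ℝ₊ⁿ` and `c > 0`, the sum `∑ λᵢ χ_{r,s}(yᵢ/c)` is a positive multiple of
`χ_{r-s,0}(G_{r,s;λ}(y)/c)`, so it vanishes at `c = G_{r,s;λ}(y)` and is nonpositive only if
`G_{r,s;λ}(y) ≤ c`. Put `Gⱼ = G_{rⱼ,sⱼ;λ}(x^j)` and `C = ∑ⱼ Gⱼ`. The hypothesis, applied to row `i`
with weights `tⱼ = Gⱼ/C` and points `zⱼ = xᵢⱼ/Gⱼ`, gives
`χ₀((∑ⱼ xᵢⱼ)/C) ≤ ∑ⱼ tⱼ χⱼ(xᵢⱼ/Gⱼ)`; summing against `λ`, the right side becomes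
`∑ⱼ tⱼ ∑ᵢ λᵢ χⱼ(xᵢⱼ/Gⱼ) = 0`, hence `G₀(∑ⱼ x^j) ≤ C`.
-/

open Finset

/-- The weighted Gini mean `G_{r,s;λ}` (both cases `r ≠ s` and `r = s`). -/
noncomputable def giniMean {n : ℕ} (r s : ℝ) (l : Fin n → ℝ) (x : Fin n → ℝ) : ℝ :=
  if r = s then
    Real.exp ((∑ i, l i * x i ^ r * Real.log (x i)) / ∑ i, l i * x i ^ r)
  else ((∑ i, l i * x i ^ r) / (∑ i, l i * x i ^ s)) ^ ((r - s)⁻¹)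

/-- The auxiliary function `χ_{r,s}`. -/
noncomputable def chi (r s t : ℝ) : ℝ :=
  if r = s then t ^ r * Real.log t else (t ^ r - t ^ s) / (r - s)

section GiniMean

variable {n : ℕ} {r s c : ℝ} {l y : Fin n → ℝ}

lemma sum_mul_pos (hn : 0 < n) (hl : ∀ i, 0 < l i) (hy : ∀ i, 0 < y i) :
    0 < ∑ i, l i * y i :=
  sum_pos (fun i _ => mul_pos (hl i) (hy i)) (univ_nonempty_iff.mpr (Fin.pos_iff_nonempty.mp hn))

lemma giniMean_pos (hn : 0 < n) (hl : ∀ i, 0 < l i) (hy : ∀ i, 0 < y i) :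
    0 < giniMean r s l y := by
  unfold giniMean
  split_ifs
  · exact Real.exp_pos _
  · exact Real.rpow_pos_of_pos (div_pos (sum_mul_pos hn hl fun i => Real.rpow_pos_of_pos (hy i) r)
      (sum_mul_pos hn hl fun i => Real.rpow_pos_of_pos (hy i) s)) _

lemma chi_one (a b : ℝ) : chi a b 1 = 0 := by
  simp [chi]

lemma chi_pos_of_one_lt (a : ℝ) {t : ℝ} (ht : 1 < t) : 0 < chi a 0 t := by
  unfold chi
  split_ifs with ha
  · simpa [ha] using Real.log_pos ht
  · rw [Real.rpow_zero, sub_zero]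
    rcases lt_or_gt_of_ne ha with ha | ha
    · exact div_pos_of_neg_of_neg (sub_neg.mpr (Real.rpow_lt_one_of_one_lt_of_neg ht ha)) ha
    · exact div_pos (sub_pos.mpr (Real.one_lt_rpow ht ha)) ha

lemma sum_mul_chi_div_eq (hn : 0 < n) (hl : ∀ i, 0 < l i) (hy : ∀ i, 0 < y i) (hc : 0 < c) :
    ∃ K > 0, ∑ i, l i * chi r s (y i / c) = K * chi (r - s) 0 (giniMean r s l y / c) := by
  have hA := sum_mul_pos hn hl fun i => Real.rpow_pos_of_pos (hy i) r
  have hB := sum_mul_pos hn hl fun i => Real.rpow_pos_of_pos (hy i) s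
  have hcr := Real.rpow_pos_of_pos hc r
  have hcs := Real.rpow_pos_of_pos hc s
  by_cases hrs : r = s
  · subst hrs
    refine ⟨(∑ i, l i * y i ^ r) / c ^ r, div_pos hA hcr, ?_⟩
    have hterm : ∀ i, l i * chi r r (y i / c) =
        (l i * y i ^ r * Real.log (y i) - l i * y i ^ r * Real.log c) / c ^ r := fun i => by
      rw [chi, if_pos rfl, Real.div_rpow (hy i).le hc.le, Real.log_div (hy i).ne' hc.ne']
      ring
    rw [sum_congr rfl fun i _ => hterm i, ← sum_div, sum_sub_distrib, ← sum_mul, giniMean,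
      if_pos rfl, sub_self, chi, if_pos rfl, Real.rpow_zero, one_mul,
      Real.log_div (Real.exp_pos _).ne' hc.ne', Real.log_exp]
    field_simp
  · refine ⟨(∑ i, l i * y i ^ s) / c ^ s, div_pos hB hcs, ?_⟩
    have hterm : ∀ i, l i * chi r s (y i / c) =
        (l i * y i ^ r / c ^ r - l i * y i ^ s / c ^ s) / (r - s) := fun i => by
      rw [chi, if_neg hrs, Real.div_rpow (hy i).le hc.le, Real.div_rpow (hy i).le hc.le]
      ring
    have hrs' : r - s ≠ 0 := sub_ne_zero.mpr hrs
    rw [sum_congr rfl fun i _ => hterm i, ← sum_div, sum_sub_distrib, ← sum_div, ← sum_div,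
      giniMean, if_neg hrs, chi, if_neg hrs', sub_zero, Real.rpow_zero,
      Real.div_rpow (Real.rpow_nonneg (div_pos hA hB).le _) hc.le,
      Real.rpow_inv_rpow (div_pos hA hB).le hrs', Real.rpow_sub hc]
    field_simp

lemma sum_mul_chi_div_giniMean (hn : 0 < n) (hl : ∀ i, 0 < l i) (hy : ∀ i, 0 < y i) :
    ∑ i, l i * chi r s (y i / giniMean r s l y) = 0 := by
  obtain ⟨K, -, hK⟩ := sum_mul_chi_div_eq hn hl hy (giniMean_pos (r := r) (s := s) hn hl hy)
  rw [hK, div_self (giniMean_pos hn hl hy).ne', chi_one, mul_zero]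

lemma giniMean_le_of_sum_mul_chi_nonpos (hn : 0 < n) (hl : ∀ i, 0 < l i) (hy : ∀ i, 0 < y i)
    (hc : 0 < c) (h : ∑ i, l i * chi r s (y i / c) ≤ 0) : giniMean r s l y ≤ c := by
  obtain ⟨K, hK, heq⟩ := sum_mul_chi_div_eq hn hl hy hc
  by_contra! hlt
  rw [heq] at h
  exact h.not_gt (mul_pos hK (chi_pos_of_one_lt (r - s) ((one_lt_div hc).mpr hlt)))

end GiniMean

lemma chi_sum_div_sum_le {k : ℕ} (hk : 0 < k) {r s : Fin (k + 1) → ℝ}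
    (key : ∀ z : Fin k → ℝ, (∀ j, 0 < z j) →
      ∀ t : Fin k → ℝ, (∀ j, t j ∈ Set.Icc (0 : ℝ) 1) → ∑ j, t j = 1 →
        chi (r 0) (s 0) (∑ j, t j * z j) ≤ ∑ j, t j * chi (r j.succ) (s j.succ) (z j))
    {z c : Fin k → ℝ} (hz : ∀ j, 0 < z j) (hc : ∀ j, 0 < c j) :
    chi (r 0) (s 0) ((∑ j, z j) / ∑ j, c j) ≤
      ∑ j, c j / (∑ j', c j') * chi (r j.succ) (s j.succ) (z j / c j) := by
  have hC : 0 < ∑ j, c j :=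
    sum_pos (fun j _ => hc j) (univ_nonempty_iff.mpr (Fin.pos_iff_nonempty.mp hk))
  have hweights : ∀ j, c j / ∑ j', c j' ∈ Set.Icc (0 : ℝ) 1 := fun j =>
    ⟨(div_pos (hc j) hC).le,
      (div_le_one hC).mpr (single_le_sum (fun j' _ => (hc j').le) (mem_univ j))⟩
  have hmean : ∑ j, c j / (∑ j', c j') * (z j / c j) = (∑ j, z j) / ∑ j, c j := by
    rw [sum_div]
    exact sum_congr rfl fun j _ => by field_simp [(hc j).ne']
  have hjensen := key (fun j => z j / c j) (fun j => div_pos (hz j) (hc j)) _ hweights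
    (by rw [← sum_div, div_self hC.ne'])
  rwa [hmean] at hjensen

/-- If `χ_{r₀,s₀}(∑ tⱼzⱼ) ≤ ∑ tⱼ χ_{rⱼ,sⱼ}(zⱼ)` for all positive `z` and
all convex weights `t`, then the Minkowski-type inequality
`G_{r₀,s₀;λ}(∑ⱼ x₁^j,…,∑ⱼ xₙ^j) ≤ ∑ⱼ G_{rⱼ,sⱼ;λ}(x^j)` holds globally on `ℝ₊^{n×k}`. -/
theorem gini_minkowski_global
    (k : ℕ) (hk : 2 ≤ k) (r s : Fin (k + 1) → ℝ)
    (key : ∀ z : Fin k → ℝ, (∀ j, 0 < z j) →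
      ∀ t : Fin k → ℝ, (∀ j, t j ∈ Set.Icc (0 : ℝ) 1) → ∑ j, t j = 1 →
        chi (r 0) (s 0) (∑ j, t j * z j) ≤ ∑ j, t j * chi (r j.succ) (s j.succ) (z j))
    (n : ℕ) (l : Fin n → ℝ) (hl : ∀ i, 0 < l i) (hl1 : ∑ i, l i = 1)
    (x : Fin n → Fin k → ℝ) (hx : ∀ i j, 0 < x i j) :
    giniMean (r 0) (s 0) l (fun i => ∑ j, x i j) ≤
      ∑ j, giniMean (r j.succ) (s j.succ) l (fun i => x i j) := by
  have hn : 0 < n := Nat.pos_of_ne_zero fun h => by subst h; simp at hl1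
  have : Nonempty (Fin k) := Fin.pos_iff_nonempty.mp (by omega)
  set c : Fin k → ℝ := fun j => giniMean (r j.succ) (s j.succ) l (fun i => x i j)
  have hc : ∀ j, 0 < c j := fun j => giniMean_pos hn hl fun i => hx i j
  have hrow : ∀ i, 0 < ∑ j, x i j := fun i =>
    sum_pos (fun j _ => hx i j) univ_nonempty
  refine giniMean_le_of_sum_mul_chi_nonpos hn hl hrow (sum_pos (fun j _ => hc j) univ_nonempty) ?_
  calc ∑ i, l i * chi (r 0) (s 0) ((∑ j, x i j) / ∑ j, c j)
      ≤ ∑ i, l i * ∑ j, c j / (∑ j', c j') * chi (r j.succ) (s j.succ) (x i j / c j) :=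
        sum_le_sum fun i _ => mul_le_mul_of_nonneg_left
          (chi_sum_div_sum_le (by omega) key (fun j => hx i j) hc) (hl i).le
    _ = ∑ j, c j / (∑ j', c j') * ∑ i, l i * chi (r j.succ) (s j.succ) (x i j / c j) := by
        simp_rw [mul_sum]
        rw [sum_comm]
        exact sum_congr rfl fun j _ => sum_congr rfl fun i _ => by ring
    _ = 0 := sum_eq_zero fun j _ => by
        rw [sum_mul_chi_div_giniMean hn hl fun i => hx i j, mul_zero]
end

section
/- Let k ≥ 2, let I₁,…,I_k ⊆ ℝ₊ be nonempty open intervals with I := I₁×⋯×I_k, and for α ∈ {0,…,k} let f_α : I_α → ℝ be differentiable with nonvanishing derivative and p₀^α : I_α → ℝ₊, and let Φ : I → I₀ be partially differentiable. Assume that for all u, y ∈ I: p₀⁰(Φ(y))(f₀(Φ(y)) − f₀(Φ(u)))/(p₀⁰(Φ(u))f₀'(Φ(u))) ≤ ∑_{j=1}^k ∂_jΦ(u)·p₀^j(y_j)(f_j(y_j) − f_j(u_j))/(p₀^j(u_j)f_j'(u_j)). Then for all n ∈ ℕ and all λ ∈ ℝ₊ⁿ with λ₁+⋯+λₙ = 1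 and all x ∈ ℝ^{n×k} with rows xᵢ ∈ I: A_{f₀,p₀⁰λ}(Φ(x₁),…,Φ(xₙ)) ≤ Φ(A_{f₁,p₀¹λ}(x¹),…,A_{f_k,p₀^kλ}(x^k)). -/
/-! Linearise `f₀` at `Φ(u)`, where `u` is the vector of column means. Averaging the
hypothesis over the rows with weights `λᵢ`, each summand on the right becomes a multiple of
`∑ᵢ λᵢ p₀ʲ(xᵢⱼ)(fⱼ(xᵢⱼ) − fⱼ(uⱼ))`, which vanishes by the definition of `uⱼ`; the left side becomes
a positive multiple of `(f₀(M) − f₀(Φ(u)))/f₀'(Φ(u))`, with `M` the mean on the left. So this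
quotient is `≤ 0`, and since `f₀` is strictly monotone in the direction of the sign of `f₀'`,
`M ≤ Φ(u)`. The means are well defined because `f(I)` is an interval, hence contains every
weighted average of values of `f`. -/

open Finset

/-- The nonsymmetric generalized Bajraktarević mean with weight functions `p_ℓ = λ_ℓ p₀`:
`A_{f,p₀λ}(x) = f⁻¹((∑ᵢ λᵢp₀(xᵢ)f(xᵢ))/(∑ᵢ λᵢp₀(xᵢ)))`, the inverse of `f` taken on `I`. -/
noncomputable def bajMeanW {n : ℕ} (f : ℝ → ℝ) (I : Set ℝ) (p : ℝ → ℝ)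
    (l : Fin n → ℝ) (x : Fin n → ℝ) : ℝ :=
  Function.invFunOn f I ((∑ i, l i * p (x i) * f (x i)) / ∑ i, l i * p (x i))

lemma weightedAvg_mem_image {ι : Type*} {S : Set ℝ} (hS : S.OrdConnected) {g : ℝ → ℝ}
    (hg : ContinuousOn g S) {s : Finset ι} {w z : ι → ℝ} (hw : ∀ i ∈ s, 0 ≤ w i)
    (hws : 0 < ∑ i ∈ s, w i) (hz : ∀ i ∈ s, z i ∈ S) :
    (∑ i ∈ s, w i * g (z i)) / ∑ i ∈ s, w i ∈ g '' S := by
  have hconv : Convex ℝ (g '' S) :=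
    (hS.isPreconnected.image g hg).ordConnected.convex
  have := hconv.centerMass_mem hw hws fun i hi => Set.mem_image_of_mem g (hz i hi)
  rwa [Finset.centerMass, smul_eq_mul, inv_mul_eq_div] at this

lemma le_of_sub_div_deriv_nonpos {S : Set ℝ} (hS : S.OrdConnected) {g : ℝ → ℝ}
    (hgd : ∀ t ∈ S, DifferentiableAt ℝ g t) (hg' : ∀ t ∈ S, deriv g t ≠ 0)
    {a b : ℝ} (ha : a ∈ S) (hb : b ∈ S) (h : (g a - g b) / deriv g b ≤ 0) : a ≤ b := by
  have hconv : Convex ℝ S := hS.convex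
  have hcont : ContinuousOn g S := fun t ht => (hgd t ht).continuousAt.continuousWithinAt
  have hderiv : ∀ t ∈ S, HasDerivWithinAt g (deriv g t) S t := fun t ht =>
    (hgd t ht).hasDerivAt.hasDerivWithinAt
  rcases hasDerivWithinAt_forall_lt_or_forall_gt_of_forall_ne hconv hderiv hg' with hneg | hpos
  · have hanti := strictAntiOn_of_deriv_neg hconv hcont fun t ht => hneg t (interior_subset ht)
    refine (hanti.le_iff_ge hb ha).1 ?_
    exact sub_nonneg.1 ((div_nonpos_iff.1 h).resolve_right fun h' => (hneg b hb).not_ge h'.2).1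
  · have hmono := strictMonoOn_of_deriv_pos hconv hcont fun t ht => hpos t (interior_subset ht)
    refine (hmono.le_iff_le ha hb).1 ?_
    exact sub_nonpos.1 ((div_nonpos_iff.1 h).resolve_left fun h' => (hpos b hb).not_ge h'.2).1

lemma sum_mul_sum_mul_div_eq_zero {ι κ : Type*} {s : Finset ι} {t : Finset κ} {l : ι → ℝ}
    {a : ι → κ → ℝ} (h : ∀ j ∈ t, ∑ i ∈ s, l i * a i j = 0) (c d : κ → ℝ) :
    ∑ i ∈ s, l i * ∑ j ∈ t, c j * (a i j / d j) = 0 := by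
  simp_rw [Finset.mul_sum]
  rw [Finset.sum_comm]
  refine Finset.sum_eq_zero fun j hj => ?_
  calc ∑ i ∈ s, l i * (c j * (a i j / d j)) = c j / d j * ∑ i ∈ s, l i * a i j := by
        rw [Finset.mul_sum]
        exact Finset.sum_congr rfl fun i _ => by ring
    _ = 0 := by rw [h j hj, mul_zero]

section bajMeanW

variable {S : Set ℝ} {g q : ℝ → ℝ} {n : ℕ} [Nonempty (Fin n)] {l z : Fin n → ℝ}

lemma sum_mul_apply_pos (hq : ∀ t ∈ S, 0 < q t) (hl : ∀ i, 0 < l i) (hz : ∀ i, z i ∈ S) :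
    0 < ∑ i, l i * q (z i) :=
  Finset.sum_pos (fun i _ => mul_pos (hl i) (hq _ (hz i))) univ_nonempty

lemma exists_apply_eq_bajMeanW_avg (hS : S.OrdConnected) (hg : ContinuousOn g S)
    (hq : ∀ t ∈ S, 0 < q t) (hl : ∀ i, 0 < l i) (hz : ∀ i, z i ∈ S) :
    ∃ a ∈ S, g a = (∑ i, l i * q (z i) * g (z i)) / ∑ i, l i * q (z i) :=
  weightedAvg_mem_image hS hg (fun i _ => (mul_pos (hl i) (hq _ (hz i))).le)
    (sum_mul_apply_pos hq hl hz) fun i _ => hz i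

lemma bajMeanW_mem (hS : S.OrdConnected) (hg : ContinuousOn g S) (hq : ∀ t ∈ S, 0 < q t)
    (hl : ∀ i, 0 < l i) (hz : ∀ i, z i ∈ S) : bajMeanW g S q l z ∈ S :=
  Function.invFunOn_mem (exists_apply_eq_bajMeanW_avg hS hg hq hl hz)

lemma sum_mul_mul_sub_eq_mul_apply_bajMeanW_sub (hS : S.OrdConnected) (hg : ContinuousOn g S)
    (hq : ∀ t ∈ S, 0 < q t) (hl : ∀ i, 0 < l i) (hz : ∀ i, z i ∈ S) (c : ℝ) :
    ∑ i, l i * (q (z i) * (g (z i) - c)) =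
      (∑ i, l i * q (z i)) * (g (bajMeanW g S q l z) - c) := by
  rw [bajMeanW, Function.invFunOn_eq (exists_apply_eq_bajMeanW_avg hS hg hq hl hz), mul_sub,
    mul_div_cancel₀ _ (sum_mul_apply_pos hq hl hz).ne', Finset.sum_mul, ← Finset.sum_sub_distrib]
  exact Finset.sum_congr rfl fun i _ => by ring

end bajMeanW

theorem bajMean_global_inequality_sufficient_general
    (k : ℕ)
    (I : Fin k → Set ℝ) (hIc : ∀ j, (I j).OrdConnected)
    (I0 : Set ℝ) (hI0c : I0.OrdConnected)
    (f0 : ℝ → ℝ) (hf0d : ∀ t ∈ I0, DifferentiableAt ℝ f0 t)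
    (hf0' : ∀ t ∈ I0, deriv f0 t ≠ 0)
    (f : Fin k → ℝ → ℝ) (hfd : ∀ j, ∀ t ∈ I j, DifferentiableAt ℝ (f j) t)
    (p0 : ℝ → ℝ) (hp0 : ∀ t ∈ I0, 0 < p0 t)
    (p : Fin k → ℝ → ℝ) (hp : ∀ j, ∀ t ∈ I j, 0 < p j t)
    (Φ : (Fin k → ℝ) → ℝ) (hΦmem : ∀ u : Fin k → ℝ, (∀ j, u j ∈ I j) → Φ u ∈ I0)
    (Φ' : (Fin k → ℝ) → Fin k → ℝ)
    (key : ∀ u y : Fin k → ℝ, (∀ j, u j ∈ I j) → (∀ j, y j ∈ I j) →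
      p0 (Φ y) * (f0 (Φ y) - f0 (Φ u)) / (p0 (Φ u) * deriv f0 (Φ u)) ≤
        ∑ j, Φ' u j *
          (p j (y j) * (f j (y j) - f j (u j)) / (p j (u j) * deriv (f j) (u j))))
    (n : ℕ) (l : Fin n → ℝ) (hl : ∀ i, 0 < l i) (hl1 : ∑ i, l i = 1)
    (x : Fin n → Fin k → ℝ) (hx : ∀ i j, x i j ∈ I j) :
    bajMeanW f0 I0 p0 l (fun i => Φ (x i)) ≤
      Φ (fun j => bajMeanW (f j) (I j) (p j) l (fun i => x i j)) := by
  have : Nonempty (Fin n) :=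
    Fin.pos_iff_nonempty.1 (Nat.pos_of_ne_zero (by rintro rfl; simp at hl1))
  have hfc : ∀ j, ContinuousOn (f j) (I j) := fun j t ht =>
    (hfd j t ht).continuousAt.continuousWithinAt
  have hf0c : ContinuousOn f0 I0 := fun t ht => (hf0d t ht).continuousAt.continuousWithinAt
  set u : Fin k → ℝ := fun j => bajMeanW (f j) (I j) (p j) l (fun i => x i j)
  have hu : ∀ j, u j ∈ I j := fun j => bajMeanW_mem (hIc j) (hfc j) (hp j) hl (hx · j)
  have hΦx : ∀ i, Φ (x i) ∈ I0 := fun i => hΦmem _ (hx i)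
  have hΦu : Φ u ∈ I0 := hΦmem u hu
  have hcolumn (j : Fin k) : ∑ i, l i * (p j (x i j) * (f j (x i j) - f j (u j))) = 0 := by
    rw [sum_mul_mul_sub_eq_mul_apply_bajMeanW_sub (hIc j) (hfc j) (hp j) hl (hx · j), sub_self,
      mul_zero]
  have havg : (∑ i, l i * (p0 (Φ (x i)) * (f0 (Φ (x i)) - f0 (Φ u)))) /
      (p0 (Φ u) * deriv f0 (Φ u)) ≤ 0 := calc
    _ = ∑ i, l i * (p0 (Φ (x i)) * (f0 (Φ (x i)) - f0 (Φ u)) / (p0 (Φ u) * deriv f0 (Φ u))) := by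
      simp_rw [Finset.sum_div, mul_div_assoc]
    _ ≤ ∑ i, l i * ∑ j, Φ' u j *
          (p j (x i j) * (f j (x i j) - f j (u j)) / (p j (u j) * deriv (f j) (u j))) :=
      Finset.sum_le_sum fun i _ => mul_le_mul_of_nonneg_left (key u (x i) hu (hx i)) (hl i).le
    _ = 0 := sum_mul_sum_mul_div_eq_zero (fun j _ => hcolumn j) _ _
  rw [sum_mul_mul_sub_eq_mul_apply_bajMeanW_sub hI0c hf0c hp0 hl hΦx, mul_div_mul_comm] at havg
  refine le_of_sub_div_deriv_nonpos hI0c hf0d hf0' (bajMeanW_mem hI0c hf0c hp0 hl hΦx) hΦu ?_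
  exact nonpos_of_mul_nonpos_right havg (div_pos (sum_mul_apply_pos hp0 hl hΦx) (hp0 _ hΦu))

/-- Sufficient condition for the global Hölder/Minkowski-type inequality
`A_{f₀,p₀⁰λ}(Φ(x₁),…,Φ(xₙ)) ≤ Φ(A_{f₁,p₀¹λ}(x¹),…,A_{f_k,p₀^kλ}(x^k))`. -/
theorem bajMean_global_inequality_sufficient
    (k : ℕ) (hk : 2 ≤ k)
    (I : Fin k → Set ℝ) (hIo : ∀ j, IsOpen (I j)) (hIc : ∀ j, (I j).OrdConnected)
    (hIne : ∀ j, (I j).Nonempty) (hIpos : ∀ j, I j ⊆ Set.Ioi (0 : ℝ))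
    (I0 : Set ℝ) (hI0o : IsOpen I0) (hI0c : I0.OrdConnected) (hI0ne : I0.Nonempty)
    (f0 : ℝ → ℝ) (hf0d : ∀ t ∈ I0, DifferentiableAt ℝ f0 t)
    (hf0' : ∀ t ∈ I0, deriv f0 t ≠ 0)
    (f : Fin k → ℝ → ℝ) (hfd : ∀ j, ∀ t ∈ I j, DifferentiableAt ℝ (f j) t)
    (hf' : ∀ j, ∀ t ∈ I j, deriv (f j) t ≠ 0)
    (p0 : ℝ → ℝ) (hp0 : ∀ t ∈ I0, 0 < p0 t)
    (p : Fin k → ℝ → ℝ) (hp : ∀ j, ∀ t ∈ I j, 0 < p j t)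
    (Φ : (Fin k → ℝ) → ℝ) (hΦmem : ∀ u : Fin k → ℝ, (∀ j, u j ∈ I j) → Φ u ∈ I0)
    (Φ' : (Fin k → ℝ) → Fin k → ℝ)
    (hΦ' : ∀ u : Fin k → ℝ, (∀ j, u j ∈ I j) → ∀ j,
      HasDerivAt (fun t => Φ (Function.update u j t)) (Φ' u j) (u j))
    (key : ∀ u y : Fin k → ℝ, (∀ j, u j ∈ I j) → (∀ j, y j ∈ I j) →
      p0 (Φ y) * (f0 (Φ y) - f0 (Φ u)) / (p0 (Φ u) * deriv f0 (Φ u)) ≤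
        ∑ j, Φ' u j *
          (p j (y j) * (f j (y j) - f j (u j)) / (p j (u j) * deriv (f j) (u j))))
    (n : ℕ) (l : Fin n → ℝ) (hl : ∀ i, 0 < l i) (hl1 : ∑ i, l i = 1)
    (x : Fin n → Fin k → ℝ) (hx : ∀ i j, x i j ∈ I j) :
    bajMeanW f0 I0 p0 l (fun i => Φ (x i)) ≤
      Φ (fun j => bajMeanW (f j) (I j) (p j) l (fun i => x i j)) :=
  bajMean_global_inequality_sufficient_general k I hIc I0 hI0c f0 hf0d hf0' f hfd p0 hp0 p hp Φ
    hΦmem Φ' key n l hl hl1 x hx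
end

section
/- Let k ≥ 2, (r₀,s₀),…,(r_k,s_k) ∈ ℝ², γᵢ := rᵢ + sᵢ − 1, and suppose that for every y ∈ ℝ₊^k the matrix with entries δ_{ij}γᵢ/yᵢ − γ₀/(y₁+⋯+y_k) (i,j ∈ {1,…,k}) is positive semidefinite. If the intervals Iᵢ = ℝ₊ (so inf Iᵢ = 0), then max(1, r₀+s₀) ≤ min(r₁+s₁, …, r_k+s_k). -/
open Finset

/- The diagonal entries of a positive semidefinite matrix are nonnegative. Choosing `y` with
`∑ y = 1` and `y j = u ∈ (0, 1)` (possible because `k ≥ 2`), the `j`-th diagonal entry gives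
`γ₀ u ≤ γⱼ`; letting `u → 0` and `u → 1` yields `0 ≤ γⱼ` and `γ₀ ≤ γⱼ`. -/

theorem exists_pos_sum_eq_one_apply_eq {ι : Type*} [Fintype ι] [DecidableEq ι]
    (hι : 1 < Fintype.card ι) (j : ι) {u : ℝ} (hu : u ∈ Set.Ioo 0 1) :
    ∃ y : ι → ℝ, (∀ i, 0 < y i) ∧ ∑ i, y i = 1 ∧ y j = u := by
  have hn : (0 : ℝ) < Fintype.card ι - 1 := by
    rw [sub_pos]; exact_mod_cast hι
  set c := (1 - u) / (Fintype.card ι - 1)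
  refine ⟨fun i => if i = j then u else c, fun i => ?_, ?_, if_pos rfl⟩
  · dsimp only
    split_ifs
    exacts [hu.1, div_pos (sub_pos.2 hu.2) hn]
  · have hc : ∀ i ∈ ({j}ᶜ : Finset ι), (if i = j then u else c) = c := fun i hi =>
      if_neg (by simpa using hi)
    rw [Fintype.sum_eq_add_sum_compl j, if_pos rfl, sum_congr rfl hc, sum_const, card_compl,
      card_singleton, nsmul_eq_mul, Nat.cast_sub hι.le, Nat.cast_one,
      mul_div_cancel₀ _ hn.ne', add_sub_cancel]

theorem nonneg_and_le_of_forall_mul_le {a b : ℝ} (h : ∀ u ∈ Set.Ioo (0 : ℝ) 1, a * u ≤ b) :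
    0 ≤ b ∧ a ≤ b := by
  have hclosure : Set.Icc (0 : ℝ) 1 ⊆ {u | a * u ≤ b} := by
    rw [← closure_Ioo zero_ne_one]
    exact closure_minimal h (isClosed_le (continuous_const.mul continuous_id) continuous_const)
  have h0 := hclosure ⟨le_rfl, zero_le_one⟩
  have h1 := hclosure ⟨zero_le_one, le_rfl⟩
  simp only [Set.mem_ofPred_eq, mul_zero, mul_one] at h0 h1
  exact ⟨h0, h1⟩

/-- With `γᵢ = rᵢ + sᵢ − 1`: if for every `y ∈ ℝ₊^k` the matrix with
entries `δ_{ij}γᵢ/yᵢ − γ₀/(y₁+⋯+y_k)` is positive semidefinite (the second-order necessary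
condition for the local Minkowski-type inequality on `ℝ₊^k`), then
`max(1, r₀+s₀) ≤ min(r₁+s₁, …, r_k+s_k)`. -/
theorem gini_minkowski_local_necessary
    (k : ℕ) (hk : 2 ≤ k) (r s : Fin (k + 1) → ℝ)
    (hpsd : ∀ y : Fin k → ℝ, (∀ i, 0 < y i) →
      (Matrix.of fun i j : Fin k =>
          (if i = j then (r i.succ + s i.succ - 1) / y i else 0) -
            (r 0 + s 0 - 1) / ∑ ℓ, y ℓ).PosSemidef) :
    ∀ j : Fin k, max 1 (r 0 + s 0) ≤ r j.succ + s j.succ := by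
  intro j
  have key : ∀ u ∈ Set.Ioo (0 : ℝ) 1, (r 0 + s 0 - 1) * u ≤ r j.succ + s j.succ - 1 := by
    intro u hu
    obtain ⟨y, hy, hsum, hyj⟩ :=
      exists_pos_sum_eq_one_apply_eq (by rw [Fintype.card_fin]; omega) j hu
    have hdiag := (hpsd y hy).diag_nonneg (i := j)
    simp only [Matrix.of_apply, if_pos, hsum, hyj, div_one, sub_nonneg] at hdiag
    rwa [le_div_iff₀ hu.1] at hdiag
  obtain ⟨hγ_nonneg, hγ₀_le⟩ := nonneg_and_le_of_forall_mul_le key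
  exact max_le (by linarith) (by linarith)
end
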